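/- arXiv:1607.03943 — 13 statements merged into one kernel-verified Lean document; each statement's English description precedes it below -/
import Mathlib

section
/- Let Q ∈ ℝ^{n×n} and R ∈ ℝ^{m×m} be symmetric positive definite, A ∈ ℝ^{m×n}, b ∈ ℝ^m, and set M = Aᵀ R⁻¹ A Q. Let λ ≠ 0 and let V, W ∈ ℝ^{n×k} satisfy Vᵀ Q V = I_k = Wᵀ Q W and have equal column spaces. Then Vᵀ Q M V + λ² I_k and Wᵀ Q M W + λ² I_k are invertible and W (Wᵀ Q M W + λ² I_k)⁻¹ Wᵀ Q Aᵀ R⁻¹ b = V (Vᵀ Q M V + λ² I_k)⁻¹ Vᵀ Q Aᵀ R⁻¹ b. (This expresses that, in exact arithmetic, k steps of gen-LSQR and k steps of CG with Q-inner product applied to (Aᵀ R⁻¹ A Q + λ² I) x = Aᵀ R⁻¹ b produce the same iterate.) -/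
/-!
If the columns of `W` lie in the column space of `V` and `Vᵀ Q V = 1`, then `W = V C` with
`C = Vᵀ Q W`, and `Wᵀ Q W = 1` makes `C` orthogonal. The projected matrix then transforms by
the congruence `Wᵀ Q M W + λ² = Cᵀ (Vᵀ Q M V + λ²) C`, hence
`W (Wᵀ Q M W + λ²)⁻¹ Wᵀ = V (Vᵀ Q M V + λ²)⁻¹ Vᵀ`. Invertibility holds because
`Uᵀ Q M U = (A Q U)ᵀ R⁻¹ (A Q U)` is positive semidefinite and `λ² > 0`.
-/

open Matrix

namespace Matrix

theorem exists_mul_eq_of_span_col_le {K : Type*} [CommSemiring K] {l m n : Type*} [Fintype m]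
    {V : Matrix l m K} {W : Matrix l n K}
    (h : Submodule.span K (Set.range W.col) ≤ Submodule.span K (Set.range V.col)) :
    ∃ X : Matrix m n K, V * X = W := by
  have hcol (j : n) : W.col j ∈ LinearMap.range V.mulVecLin :=
    V.range_mulVecLin ▸ h (Submodule.subset_span ⟨j, rfl⟩)
  choose x hx using hcol
  refine ⟨(of x)ᵀ, ?_⟩
  ext i j
  simpa [mul_apply, mulVec, dotProduct] using congrFun (hx j) i

section CommRing

variable {K : Type*} [CommRing K] {l n : Type*} [Fintype n] [DecidableEq n]

theorem mul_transpose_mul_mul_eq_of_span_col_le [Fintype l] {Q : Matrix l l K}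
    {V W : Matrix l n K} (hV : Vᵀ * Q * V = 1)
    (h : Submodule.span K (Set.range W.col) ≤ Submodule.span K (Set.range V.col)) :
    V * (Vᵀ * Q * W) = W := by
  obtain ⟨X, rfl⟩ := exists_mul_eq_of_span_col_le h
  rw [← Matrix.mul_assoc (Vᵀ * Q), hV, Matrix.one_mul]

theorem transpose_mul_self_eq_one_of_mul_eq [Fintype l] {Q : Matrix l l K}
    {V W : Matrix l n K} {C : Matrix n n K} (hV : Vᵀ * Q * V = 1) (hW : Wᵀ * Q * W = 1)
    (hC : V * C = W) : Cᵀ * C = 1 :=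
  calc Cᵀ * C = Cᵀ * (Vᵀ * Q * V) * C := by rw [hV, Matrix.mul_one]
    _ = (V * C)ᵀ * Q * (V * C) := by simp only [transpose_mul, Matrix.mul_assoc]
    _ = 1 := by rw [hC, hW]

variable {C : Matrix n n K}

theorem transpose_mul_mul_add_smul_one_of_transpose_mul_self [Fintype l] (hC : Cᵀ * C = 1)
    (V : Matrix l n K) (P : Matrix l l K) (c : K) :
    (V * C)ᵀ * P * (V * C) + c • 1 = Cᵀ * (Vᵀ * P * V + c • 1) * C := by
  rw [Matrix.mul_add, Matrix.add_mul, Matrix.mul_smul, Matrix.smul_mul, Matrix.mul_one, hC]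
  simp only [transpose_mul, Matrix.mul_assoc]

theorem mul_inv_mul_transpose_of_transpose_mul_self (hC : Cᵀ * C = 1)
    (V : Matrix l n K) (S : Matrix n n K) :
    V * C * (Cᵀ * S * C)⁻¹ * (V * C)ᵀ = V * S⁻¹ * Vᵀ := by
  have hCt : C * Cᵀ = 1 := mul_eq_one_comm.mp hC
  rw [Matrix.mul_inv_rev, Matrix.mul_inv_rev, inv_eq_left_inv hC, inv_eq_right_inv hC,
    transpose_mul]
  simp only [Matrix.mul_assoc]
  rw [← Matrix.mul_assoc C Cᵀ, hCt, Matrix.one_mul, ← Matrix.mul_assoc C Cᵀ, hCt,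
    Matrix.one_mul]

end CommRing

theorem posDef_transpose_mul_normal_mul_add_smul_one {l m n : Type*} [Fintype l] [Fintype m]
    [Fintype n] [DecidableEq m] [DecidableEq n] {A : Matrix m l ℝ} {R : Matrix m m ℝ}
    {Q : Matrix l l ℝ} (hR : R.PosDef) (hQ : Q.IsHermitian) (U : Matrix l n ℝ) {c : ℝ}
    (hc : 0 < c) : (Uᵀ * Q * (Aᵀ * R⁻¹ * A * Q) * U + c • 1).PosDef := by
  have hgram : Uᵀ * Q * (Aᵀ * R⁻¹ * A * Q) * U = (A * Q * U)ᴴ * R⁻¹ * (A * Q * U) := by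
    have hQt : Qᵀ = Q := (conjTranspose_eq_transpose_of_trivial Q).symm.trans hQ.eq
    simp only [conjTranspose_eq_transpose_of_trivial, transpose_mul, hQt, Matrix.mul_assoc]
  rw [hgram]
  exact PosDef.posSemidef_add (hR.inv.posSemidef.conjTranspose_mul_mul_same _) (PosDef.one.smul hc)

end Matrix

theorem stmt_0 {m n k : ℕ} (A : Matrix (Fin m) (Fin n) ℝ) (b : Fin m → ℝ)
    (R : Matrix (Fin m) (Fin m) ℝ) (Q : Matrix (Fin n) (Fin n) ℝ)
    (hR : R.PosDef) (hQ : Q.PosDef) (lam : ℝ) (hlam : lam ≠ 0)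
    (V W : Matrix (Fin n) (Fin k) ℝ)
    (hV : Vᵀ * Q * V = 1) (hW : Wᵀ * Q * W = 1)
    (hspan : Submodule.span ℝ (Set.range fun j : Fin k => fun i : Fin n => V i j)
           = Submodule.span ℝ (Set.range fun j : Fin k => fun i : Fin n => W i j)) :
    IsUnit (Vᵀ * Q * (Aᵀ * R⁻¹ * A * Q) * V + lam ^ 2 • (1 : Matrix (Fin k) (Fin k) ℝ)) ∧
    IsUnit (Wᵀ * Q * (Aᵀ * R⁻¹ * A * Q) * W + lam ^ 2 • (1 : Matrix (Fin k) (Fin k) ℝ)) ∧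
    (W * (Wᵀ * Q * (Aᵀ * R⁻¹ * A * Q) * W + lam ^ 2 • (1 : Matrix (Fin k) (Fin k) ℝ))⁻¹ *
        Wᵀ * Q * Aᵀ * R⁻¹) *ᵥ b
      = (V * (Vᵀ * Q * (Aᵀ * R⁻¹ * A * Q) * V + lam ^ 2 • (1 : Matrix (Fin k) (Fin k) ℝ))⁻¹ *
        Vᵀ * Q * Aᵀ * R⁻¹) *ᵥ b := by
  have hlam2 : 0 < lam ^ 2 := by positivity
  refine ⟨(posDef_transpose_mul_normal_mul_add_smul_one hR hQ.isHermitian V hlam2).isUnit,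
    (posDef_transpose_mul_normal_mul_add_smul_one hR hQ.isHermitian W hlam2).isUnit, ?_⟩
  have hVC : V * (Vᵀ * Q * W) = W := mul_transpose_mul_mul_eq_of_span_col_le hV hspan.ge
  obtain ⟨C, hC, rfl⟩ : ∃ C : Matrix (Fin k) (Fin k) ℝ, Cᵀ * C = 1 ∧ V * C = W :=
    ⟨_, transpose_mul_self_eq_one_of_mul_eq hV hW hVC, hVC⟩
  simp only [Matrix.mul_assoc _ Q (Aᵀ * R⁻¹ * A * Q)]
  rw [transpose_mul_mul_add_smul_one_of_transpose_mul_self hC,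
    mul_inv_mul_transpose_of_transpose_mul_self hC]
end

section
/- Let Q ∈ ℝ^{n×n} and R ∈ ℝ^{m×m} be symmetric positive definite, A ∈ ℝ^{m×n}, b ∈ ℝ^m, and set M = Aᵀ R⁻¹ A Q. Let λ ≠ 0 and let V, W ∈ ℝ^{n×k} satisfy Vᵀ Q V = I_k = Wᵀ Q W and have equal column spaces. Then Vᵀ Mᵀ Q M V + λ² I_k and Wᵀ Mᵀ Q M W + λ² I_k are invertible and W (Wᵀ Mᵀ Q M W + λ² I_k)⁻¹ Wᵀ Q M Aᵀ R⁻¹ b = V (Vᵀ Mᵀ Q M V + λ² I_k)⁻¹ Vᵀ Q M Aᵀ R⁻¹ b. (This expresses that, in exact arithmetic, k steps of gen-LSMR and k steps of MINRES with Q-inner product applied to (Aᵀ R⁻¹ A Q + λ² I) x = Aᵀ R⁻¹ b produce the same iterate.) -/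
open Matrix

private lemma smul_one_posDef {k : ℕ} {c : ℝ} (hc : 0 < c) :
    (c • (1 : Matrix (Fin k) (Fin k) ℝ)).PosDef := by
  rw [Matrix.smul_one_eq_diagonal]
  exact Matrix.posDef_diagonal_iff.mpr fun _ => hc

private lemma key_posDef {n k : ℕ} (Q : Matrix (Fin n) (Fin n) ℝ) (hQ : Q.PosDef)
    (X : Matrix (Fin n) (Fin k) ℝ) {lam : ℝ} (hlam : lam ≠ 0) :
    (Xᵀ * Q * X + lam ^ 2 • (1 : Matrix (Fin k) (Fin k) ℝ)).PosDef := by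
  have h1 : (Xᵀ * Q * X).PosSemidef := by
    have := hQ.posSemidef.conjTranspose_mul_mul_same X
    rwa [conjTranspose_eq_transpose_of_trivial] at this
  exact Matrix.PosDef.posSemidef_add h1 (smul_one_posDef (by positivity))

theorem stmt_1 {m n k : ℕ} (A : Matrix (Fin m) (Fin n) ℝ) (b : Fin m → ℝ)
    (R : Matrix (Fin m) (Fin m) ℝ) (Q : Matrix (Fin n) (Fin n) ℝ)
    (hR : R.PosDef) (hQ : Q.PosDef) (lam : ℝ) (hlam : lam ≠ 0)
    (V W : Matrix (Fin n) (Fin k) ℝ)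
    (hV : Vᵀ * Q * V = 1) (hW : Wᵀ * Q * W = 1)
    (hspan : Submodule.span ℝ (Set.range fun j : Fin k => fun i : Fin n => V i j)
           = Submodule.span ℝ (Set.range fun j : Fin k => fun i : Fin n => W i j)) :
    IsUnit (Vᵀ * (Aᵀ * R⁻¹ * A * Q)ᵀ * Q * (Aᵀ * R⁻¹ * A * Q) * V +
        lam ^ 2 • (1 : Matrix (Fin k) (Fin k) ℝ)) ∧
    IsUnit (Wᵀ * (Aᵀ * R⁻¹ * A * Q)ᵀ * Q * (Aᵀ * R⁻¹ * A * Q) * W +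
        lam ^ 2 • (1 : Matrix (Fin k) (Fin k) ℝ)) ∧
    (W * (Wᵀ * (Aᵀ * R⁻¹ * A * Q)ᵀ * Q * (Aᵀ * R⁻¹ * A * Q) * W +
        lam ^ 2 • (1 : Matrix (Fin k) (Fin k) ℝ))⁻¹ *
        Wᵀ * Q * (Aᵀ * R⁻¹ * A * Q) * Aᵀ * R⁻¹) *ᵥ b
      = (V * (Vᵀ * (Aᵀ * R⁻¹ * A * Q)ᵀ * Q * (Aᵀ * R⁻¹ * A * Q) * V +
        lam ^ 2 • (1 : Matrix (Fin k) (Fin k) ℝ))⁻¹ *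
        Vᵀ * Q * (Aᵀ * R⁻¹ * A * Q) * Aᵀ * R⁻¹) *ᵥ b := by
  set M : Matrix (Fin n) (Fin n) ℝ := Aᵀ * R⁻¹ * A * Q with hM
  -- rewrite the quadratic parts in the form Xᵀ * Q * X
  have hformV : Vᵀ * Mᵀ * Q * M * V = (M * V)ᵀ * Q * (M * V) := by
    simp only [transpose_mul, Matrix.mul_assoc]
  have hformW : Wᵀ * Mᵀ * Q * M * W = (M * W)ᵀ * Q * (M * W) := by
    simp only [transpose_mul, Matrix.mul_assoc]
  have hSV : (Vᵀ * Mᵀ * Q * M * V + lam ^ 2 • (1 : Matrix (Fin k) (Fin k) ℝ)).PosDef := by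
    rw [hformV]; exact key_posDef Q hQ (M * V) hlam
  have hSW : (Wᵀ * Mᵀ * Q * M * W + lam ^ 2 • (1 : Matrix (Fin k) (Fin k) ℝ)).PosDef := by
    rw [hformW]; exact key_posDef Q hQ (M * W) hlam
  refine ⟨hSV.isUnit, hSW.isUnit, ?_⟩
  -- find U with W = V * U
  have hcol : ∀ j : Fin k, ∃ c : Fin k → ℝ,
      (∑ l, c l • fun i : Fin n => V i l) = fun i : Fin n => W i j := by
    intro j
    have hmem : (fun i : Fin n => W i j) ∈
        Submodule.span ℝ (Set.range fun j : Fin k => fun i : Fin n => V i j) := by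
      rw [hspan]; exact Submodule.subset_span ⟨j, rfl⟩
    exact (Submodule.mem_span_range_iff_exists_fun ℝ).mp hmem
  choose c hc using hcol
  set U : Matrix (Fin k) (Fin k) ℝ := fun l j => c j l with hU
  have hWVU : W = V * U := by
    ext i j
    have := congrFun (hc j) i
    simp only [Finset.sum_apply, Pi.smul_apply, smul_eq_mul] at this
    rw [Matrix.mul_apply]
    rw [← this]
    exact Finset.sum_congr rfl fun l _ => mul_comm _ _
  have hUtU : Uᵀ * U = 1 := by
    calc Uᵀ * U = Uᵀ * (Vᵀ * Q * V) * U := by rw [hV, Matrix.mul_one]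
    _ = Wᵀ * Q * W := by rw [hWVU]; simp only [transpose_mul, Matrix.mul_assoc]
    _ = 1 := hW
  have hUUt : U * Uᵀ = 1 := mul_eq_one_comm.mp hUtU
  have hUinv : U⁻¹ = Uᵀ := Matrix.inv_eq_left_inv hUtU
  have hUtinv : Uᵀ⁻¹ = U := Matrix.inv_eq_left_inv hUUt
  -- S_W = Uᵀ * S_V * U
  set SV := Vᵀ * Mᵀ * Q * M * V + lam ^ 2 • (1 : Matrix (Fin k) (Fin k) ℝ) with hSVdef
  set SW := Wᵀ * Mᵀ * Q * M * W + lam ^ 2 • (1 : Matrix (Fin k) (Fin k) ℝ) with hSWdef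
  have hSWU : SW = Uᵀ * SV * U := by
    rw [hSVdef, hSWdef, hWVU]
    rw [Matrix.mul_add, Matrix.add_mul]
    congr 1
    · simp only [transpose_mul, Matrix.mul_assoc]
    · rw [Matrix.mul_smul, Matrix.mul_one, Matrix.smul_mul, hUtU]
  have hSWinv : SW⁻¹ = Uᵀ * SV⁻¹ * U := by
    rw [hSWU, Matrix.mul_inv_rev, Matrix.mul_inv_rev, hUinv, hUtinv, Matrix.mul_assoc]
  have hkey : W * SW⁻¹ * Wᵀ = V * SV⁻¹ * Vᵀ := by
    rw [hSWinv, hWVU]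
    calc V * U * (Uᵀ * SV⁻¹ * U) * (V * U)ᵀ
        = V * ((U * Uᵀ) * SV⁻¹ * (U * Uᵀ)) * Vᵀ := by
          simp only [transpose_mul, Matrix.mul_assoc]
    _ = V * SV⁻¹ * Vᵀ := by rw [hUUt, Matrix.one_mul, Matrix.mul_one, Matrix.mul_assoc]
  rw [hkey]
end

section
/- Let R ∈ ℝ^{m×m} and Q ∈ ℝ^{n×n} be symmetric positive definite with factorizations R⁻¹ = L_Rᵀ L_R and Q⁻¹ = L_Qᵀ L_Q (L_R, L_Q invertible). Suppose U_R ∈ ℝ^{m×m} satisfies U_Rᵀ R⁻¹ U_R = I_m, V_Q ∈ ℝ^{n×n} satisfies V_Qᵀ Q⁻¹ V_Q = I_n, and U_R⁻¹ A V_Q = Σ for some Σ ∈ ℝ^{m×n}. Then the matrices Û = L_R U_R and V̂ = L_Q⁻ᵀ V_Q⁻ᵀ are orthogonal (Ûᵀ Û = I_m and V̂ᵀ V̂ = I_n) and L_R A L_Q⁻¹ = Û Σ V̂ᵀ. In particular, the generalized singular value decomposition of A yields a singular value decomposition of the priorconditioned matrix Â = L_R A L_Q⁻¹ with the same matrix Σ.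 -/
/-!
With `R⁻¹ = L_Rᵀ L_R`, the condition `U_Rᵀ R⁻¹ U_R = I` says exactly that `L_R U_R` is orthogonal,
and likewise for `L_Q V_Q`. An orthogonal matrix is its own inverse transpose,
so `L_Q⁻ᵀ V_Q⁻ᵀ = ((L_Q V_Q)ᵀ)⁻¹ = L_Q V_Q`, and `Σ = U_R⁻¹ A V_Q` rearranges to
`L_R A L_Q⁻¹ = (L_R U_R) Σ (L_Q V_Q)⁻¹ = Û Σ V̂ᵀ`.
-/

open Matrix

variable {k l m n α : Type*}

theorem Matrix.transpose_mul_self_eq_one_of_eq_transpose_mul [Fintype k] [Fintype m]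
    [DecidableEq l] [CommSemiring α] {L : Matrix k m α} {M : Matrix m m α} {B : Matrix m l α}
    (hM : M = Lᵀ * L) (hB : Bᵀ * M * B = 1) : (L * B)ᵀ * (L * B) = 1 := by
  rwa [transpose_mul, Matrix.mul_assoc, ← Matrix.mul_assoc Lᵀ, ← hM, ← Matrix.mul_assoc]

theorem Matrix.eq_mul_mul_inv_of_inv_mul_mul_eq [Fintype m] [Fintype n] [DecidableEq m]
    [DecidableEq n] [CommRing α] {U : Matrix m m α} {V : Matrix n n α} {A S : Matrix m n α}
    (hU : IsUnit U.det) (hV : IsUnit V.det) (h : U⁻¹ * A * V = S) : A = U * S * V⁻¹ := by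
  rw [← h, Matrix.mul_assoc, mul_nonsing_inv_cancel_right V _ hV,
    mul_nonsing_inv_cancel_left U _ hU]

theorem stmt_4_general {m n : ℕ} (A : Matrix (Fin m) (Fin n) ℝ)
    (R LR UR : Matrix (Fin m) (Fin m) ℝ) (Q LQ VQ : Matrix (Fin n) (Fin n) ℝ)
    (Sg : Matrix (Fin m) (Fin n) ℝ)
    (hLR : R⁻¹ = LRᵀ * LR) (hLQ : Q⁻¹ = LQᵀ * LQ)
    (hUR : URᵀ * R⁻¹ * UR = 1) (hVQ : VQᵀ * Q⁻¹ * VQ = 1)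
    (hGSVD : UR⁻¹ * A * VQ = Sg) :
    (LR * UR)ᵀ * (LR * UR) = 1 ∧
    ((LQᵀ)⁻¹ * (VQᵀ)⁻¹)ᵀ * ((LQᵀ)⁻¹ * (VQᵀ)⁻¹) = 1 ∧
    LR * A * LQ⁻¹ = (LR * UR) * Sg * ((LQᵀ)⁻¹ * (VQᵀ)⁻¹)ᵀ := by
  have hU : (LR * UR)ᵀ * (LR * UR) = 1 := transpose_mul_self_eq_one_of_eq_transpose_mul hLR hUR
  have hV : (LQ * VQ)ᵀ * (LQ * VQ) = 1 := transpose_mul_self_eq_one_of_eq_transpose_mul hLQ hVQ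
  have hV_eq : (LQᵀ)⁻¹ * (VQᵀ)⁻¹ = LQ * VQ := by
    rw [← Matrix.mul_inv_rev, ← transpose_mul, inv_eq_right_inv hV]
  have hA : A = UR * Sg * VQ⁻¹ :=
    eq_mul_mul_inv_of_inv_mul_mul_eq (isUnit_det_of_left_inverse hUR)
      (isUnit_det_of_left_inverse hVQ) hGSVD
  rw [hV_eq]
  refine ⟨hU, hV, ?_⟩
  rw [hA, ← inv_eq_left_inv hV, Matrix.mul_inv_rev]
  simp only [Matrix.mul_assoc]

theorem stmt_4 {m n : ℕ} (A : Matrix (Fin m) (Fin n) ℝ)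
    (R LR UR : Matrix (Fin m) (Fin m) ℝ) (Q LQ VQ : Matrix (Fin n) (Fin n) ℝ)
    (Sg : Matrix (Fin m) (Fin n) ℝ)
    (hR : R.PosDef) (hQ : Q.PosDef)
    (hLR : R⁻¹ = LRᵀ * LR) (hLQ : Q⁻¹ = LQᵀ * LQ)
    (hLRu : IsUnit LR) (hLQu : IsUnit LQ)
    (hUR : URᵀ * R⁻¹ * UR = 1) (hVQ : VQᵀ * Q⁻¹ * VQ = 1)
    (hGSVD : UR⁻¹ * A * VQ = Sg) :
    (LR * UR)ᵀ * (LR * UR) = 1 ∧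
    ((LQᵀ)⁻¹ * (VQᵀ)⁻¹)ᵀ * ((LQᵀ)⁻¹ * (VQᵀ)⁻¹) = 1 ∧
    LR * A * LQ⁻¹ = (LR * UR) * Sg * ((LQᵀ)⁻¹ * (VQᵀ)⁻¹)ᵀ :=
  stmt_4_general A R LR UR Q LQ VQ Sg hLR hLQ hUR hVQ hGSVD
end

section
/- Let R ∈ ℝ^{m×m} be symmetric positive definite with R⁻¹ = L_Rᵀ L_R, let L_Q ∈ ℝ^{n×n} be invertible, and set Q = L_Q⁻¹ L_Q⁻ᵀ (so Q⁻¹ = L_Qᵀ L_Q). Let Â = L_R A L_Q⁻¹ and b̂ = L_R b. Then for every k ≥ 1, the Krylov subspace K_k(Âᵀ Â, Âᵀ b̂) equals the image under the linear map x ↦ L_Q⁻ᵀ x of the Krylov subspace K_k(Aᵀ R⁻¹ A Q, Aᵀ R⁻¹ b). -/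
open Matrix

/-- The `k`-dimensional Krylov subspace `K_k(C, g) = span {g, Cg, ..., C^(k-1) g}`. -/
def krylov {n : ℕ} (C : Matrix (Fin n) (Fin n) ℝ) (g : Fin n → ℝ) (k : ℕ) :
    Submodule ℝ (Fin n → ℝ) :=
  Submodule.span ℝ (Set.range fun q : Fin k => (C ^ (q : ℕ)) *ᵥ g)

lemma conj_pow_aux {n : ℕ} (S C : Matrix (Fin n) (Fin n) ℝ) (hS : IsUnit S)
    (q : ℕ) : (S * C * S⁻¹) ^ q = S * C ^ q * S⁻¹ := by
  have hSi : S⁻¹ * S = 1 := nonsing_inv_mul S (isUnit_iff_isUnit_det S |>.mp hS)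
  have hSi' : S * S⁻¹ = 1 := mul_nonsing_inv S (isUnit_iff_isUnit_det S |>.mp hS)
  induction q with
  | zero => simp [hSi']
  | succ q ih =>
    rw [pow_succ, pow_succ, ih]
    calc S * C ^ q * S⁻¹ * (S * C * S⁻¹) = S * C ^ q * (S⁻¹ * S) * C * S⁻¹ := by
          noncomm_ring
      _ = S * (C ^ q * C) * S⁻¹ := by rw [hSi]; noncomm_ring

lemma krylov_conj {n : ℕ} (S C : Matrix (Fin n) (Fin n) ℝ) (hS : IsUnit S)
    (g : Fin n → ℝ) (k : ℕ) :
    krylov (S * C * S⁻¹) (S *ᵥ g) k = Submodule.map S.mulVecLin (krylov C g k) := by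
  have hSi : S⁻¹ * S = 1 := nonsing_inv_mul S (isUnit_iff_isUnit_det S |>.mp hS)
  unfold krylov
  rw [Submodule.map_span]
  congr 1
  rw [← Set.range_comp]
  refine congrArg _ (funext fun q => ?_)
  simp only [Function.comp, mulVecLin_apply, conj_pow_aux S C hS, mulVec_mulVec]
  rw [Matrix.mul_assoc, Matrix.mul_assoc, hSi, Matrix.mul_one]

theorem stmt_5 {m n : ℕ} (A : Matrix (Fin m) (Fin n) ℝ) (b : Fin m → ℝ)
    (R LR : Matrix (Fin m) (Fin m) ℝ) (Q LQ : Matrix (Fin n) (Fin n) ℝ)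
    (hR : R.PosDef) (hLR : R⁻¹ = LRᵀ * LR) (hLQu : IsUnit LQ)
    (hQ : Q = LQ⁻¹ * (LQᵀ)⁻¹)
    (k : ℕ) (hk : 1 ≤ k) :
    krylov ((LR * A * LQ⁻¹)ᵀ * (LR * A * LQ⁻¹)) ((LR * A * LQ⁻¹)ᵀ *ᵥ (LR *ᵥ b)) k
      = Submodule.map (Matrix.mulVecLin (LQᵀ)⁻¹)
          (krylov (Aᵀ * R⁻¹ * A * Q) ((Aᵀ * R⁻¹) *ᵥ b) k) := by
  set S : Matrix (Fin n) (Fin n) ℝ := (LQᵀ)⁻¹ with hS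
  have hLQTu : IsUnit LQᵀ := (isUnit_iff_isUnit_det _).mpr (by
    rw [det_transpose]; exact (isUnit_iff_isUnit_det _).mp hLQu)
  have hdet : IsUnit LQᵀ.det := (isUnit_iff_isUnit_det _).mp hLQTu
  have hSu : IsUnit S := isUnit_nonsing_inv_iff.mpr hLQTu
  have hSinv : S⁻¹ = LQᵀ := nonsing_inv_nonsing_inv _ hdet
  have hTi : (LQ⁻¹)ᵀ = S := (transpose_nonsing_inv LQ).symm ▸ rfl
  have hcancel : S * LQᵀ = 1 := nonsing_inv_mul _ hdet
  have hmat : (LR * A * LQ⁻¹)ᵀ * (LR * A * LQ⁻¹) = S * (Aᵀ * R⁻¹ * A * Q) * S⁻¹ := by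
    rw [hQ, hLR, hSinv, transpose_mul, transpose_mul, hTi]
    simp only [Matrix.mul_assoc]
    rw [hcancel, Matrix.mul_one]
  have hvec : (LR * A * LQ⁻¹)ᵀ *ᵥ (LR *ᵥ b) = S *ᵥ ((Aᵀ * R⁻¹) *ᵥ b) := by
    rw [mulVec_mulVec, mulVec_mulVec, transpose_mul, transpose_mul, hTi, hLR]
    congr 1
    simp only [Matrix.mul_assoc]
  rw [hmat, hvec, krylov_conj S _ hSu]
end

section
/- Let R ∈ ℝ^{m×m} be symmetric positive definite with R⁻¹ = L_Rᵀ L_R, let L_Q ∈ ℝ^{n×n} be invertible, and set Q = L_Q⁻¹ L_Q⁻ᵀ. Let Â = L_R A L_Q⁻¹ and b̂ = L_R b. Let V ∈ ℝ^{n×k} and let Z ∈ ℝ^{k×k} be orthogonal, set V̂ = L_Q⁻ᵀ V Z, and let λ ∈ ℝ be such that Vᵀ Q Aᵀ R⁻¹ A Q V + λ² I_k is invertible. Then V̂ᵀ Âᵀ Â V̂ + λ² I_k is invertible and, for any μ ∈ ℝ^n, μ + L_Q⁻¹ V̂ (V̂ᵀ Âᵀ Â V̂ + λ² I_k)⁻¹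 V̂ᵀ Âᵀ b̂ = μ + Q V (Vᵀ Q Aᵀ R⁻¹ A Q V + λ² I_k)⁻¹ Vᵀ Q Aᵀ R⁻¹ b. (This expresses that the k-th gen-LSQR iterate μ + Q V_k z_k coincides with μ + L_Q⁻¹ w_k where w_k is the k-th LSQR iterate for the priorconditioned Tikhonov problem min_w ‖L_R A L_Q⁻¹ w − L_R b‖₂² + λ²‖w‖₂².) -/
open Matrix

theorem stmt_6 {m n k : ℕ} (A : Matrix (Fin m) (Fin n) ℝ) (b : Fin m → ℝ)
    (R LR : Matrix (Fin m) (Fin m) ℝ) (Q LQ : Matrix (Fin n) (Fin n) ℝ)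
    (hR : R.PosDef) (hLR : R⁻¹ = LRᵀ * LR) (hLQu : IsUnit LQ)
    (hQ : Q = LQ⁻¹ * (LQᵀ)⁻¹)
    (V : Matrix (Fin n) (Fin k) ℝ) (Z : Matrix (Fin k) (Fin k) ℝ) (hZ : Zᵀ * Z = 1)
    (lam : ℝ)
    (hinv : IsUnit (Vᵀ * Q * Aᵀ * R⁻¹ * A * Q * V + lam ^ 2 • (1 : Matrix (Fin k) (Fin k) ℝ)))
    (μ : Fin n → ℝ) :
    IsUnit (((LQᵀ)⁻¹ * V * Z)ᵀ * (LR * A * LQ⁻¹)ᵀ * (LR * A * LQ⁻¹) * ((LQᵀ)⁻¹ * V * Z) +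
        lam ^ 2 • (1 : Matrix (Fin k) (Fin k) ℝ)) ∧
    μ + (LQ⁻¹ * ((LQᵀ)⁻¹ * V * Z) *
          (((LQᵀ)⁻¹ * V * Z)ᵀ * (LR * A * LQ⁻¹)ᵀ * (LR * A * LQ⁻¹) * ((LQᵀ)⁻¹ * V * Z) +
            lam ^ 2 • (1 : Matrix (Fin k) (Fin k) ℝ))⁻¹ *
          ((LQᵀ)⁻¹ * V * Z)ᵀ * (LR * A * LQ⁻¹)ᵀ) *ᵥ (LR *ᵥ b)
      = μ + (Q * V *
          (Vᵀ * Q * Aᵀ * R⁻¹ * A * Q * V + lam ^ 2 • (1 : Matrix (Fin k) (Fin k) ℝ))⁻¹ *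
          Vᵀ * Q * Aᵀ * R⁻¹) *ᵥ b := by
  set M : Matrix (Fin k) (Fin k) ℝ :=
    Vᵀ * Q * Aᵀ * R⁻¹ * A * Q * V + lam ^ 2 • (1 : Matrix (Fin k) (Fin k) ℝ) with hM
  have hZZt : Z * Zᵀ = 1 := (mul_eq_one_comm).mp hZ
  have hZu : IsUnit Z := ⟨⟨Z, Zᵀ, hZZt, hZ⟩, rfl⟩
  have hZtu : IsUnit Zᵀ := ⟨⟨Zᵀ, Z, hZ, hZZt⟩, rfl⟩
  have hZinv : Z⁻¹ = Zᵀ := inv_eq_left_inv hZ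
  have hZtinv : (Zᵀ)⁻¹ = Z := inv_eq_right_inv hZ
  have hLQt : ((LQᵀ)⁻¹)ᵀ = LQ⁻¹ := by
    rw [← Matrix.transpose_nonsing_inv, Matrix.transpose_transpose]
  -- expand the hatted matrix
  have hE : (((LQᵀ)⁻¹ * V * Z)ᵀ * (LR * A * LQ⁻¹)ᵀ * (LR * A * LQ⁻¹) * ((LQᵀ)⁻¹ * V * Z) +
        lam ^ 2 • (1 : Matrix (Fin k) (Fin k) ℝ)) = Zᵀ * M * Z := by
    rw [hM, Matrix.mul_add, Matrix.add_mul]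
    congr 1
    · simp only [Matrix.transpose_mul, Matrix.transpose_nonsing_inv, Matrix.transpose_transpose, hQ, hLR, Matrix.mul_assoc]
    · rw [Matrix.mul_smul, Matrix.mul_one, Matrix.smul_mul, hZ]
  have hMu : IsUnit (Zᵀ * M * Z) := (hZtu.mul hinv).mul hZu
  refine ⟨hE ▸ hMu, ?_⟩
  congr 1
  rw [Matrix.mulVec_mulVec]
  congr 1
  rw [hE, Matrix.mul_inv_rev, Matrix.mul_inv_rev, hZinv, hZtinv]
  -- now pure matrix algebra
  have key : LQ⁻¹ * ((LQᵀ)⁻¹ * V * Z) * (Zᵀ * (M⁻¹ * Z)) * ((LQᵀ)⁻¹ * V * Z)ᵀ *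
      (LR * A * LQ⁻¹)ᵀ * LR = Q * V * M⁻¹ * Vᵀ * Q * Aᵀ * R⁻¹ := by
    simp only [Matrix.transpose_mul, Matrix.transpose_nonsing_inv, Matrix.transpose_transpose,
      hQ, hLR, Matrix.mul_assoc]
    rw [show Z * (Zᵀ * (M⁻¹ * (Z * (Zᵀ * (Vᵀ * (LQ⁻¹ * (LQᵀ⁻¹ * (Aᵀ * (LRᵀ * LR))))))))) =
        M⁻¹ * (Vᵀ * (LQ⁻¹ * (LQᵀ⁻¹ * (Aᵀ * (LRᵀ * LR))))) from by
      rw [← Matrix.mul_assoc Z Zᵀ, hZZt, Matrix.one_mul, ← Matrix.mul_assoc Z Zᵀ, hZZt,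
        Matrix.one_mul]]
  rw [key]
end

section
/- Let A ∈ ℝ^{m×n} (m ≥ n), d ∈ ℝ^m, μ ∈ ℝ^n, let R ∈ ℝ^{m×m} and Q ∈ ℝ^{n×n} be symmetric positive definite, and let λ ∈ ℝ. Suppose U_R ∈ ℝ^{m×m} with U_Rᵀ R⁻¹ U_R = I_m, V_Q ∈ ℝ^{n×n} with V_Qᵀ Q⁻¹ V_Q = I_n, and U_R⁻¹ A V_Q = Σ where Σ ∈ ℝ^{m×n} has Σ_{ij} = 0 for i ≠ j and diagonal entries σ̂_1, ..., σ̂_n > 0. Set b = d − A μ and let ū_j, v̄_j denote the columns of U_R and V_Q. Then the vector s_λ = μ + Σ_{j=1}^n [σ̂_j² / (σ̂_j² + λ²)] · (ū_jᵀ R⁻¹ b / σ̂_j) · v̄_j satisfies the normal equations (Aᵀ R⁻¹ A + λ² Q⁻¹) s_λ = Aᵀ R⁻¹ d + λ² Q⁻¹ μ; i.e., the MAP estimate is a filtered GSVD solution with Tikhonov filter factors σ̂_j²/(σ̂_j² + λ²). -/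
/-!
Multiplying the normal equations by `V_Qᵀ` on the left and substituting `s = μ + V_Q c` turns
them, via `A V_Q = U_R Σ`, `U_Rᵀ R⁻¹ U_R = I` and `V_Qᵀ Q⁻¹ V_Q = I`, into the diagonal system
`(Σᵀ Σ + λ² I) c = Σᵀ (U_Rᵀ R⁻¹ b)`, which is solved coordinatewise by the filtered coefficients
`c_j = σ̂_j / (σ̂_j² + λ²) · ū_jᵀ R⁻¹ b`.
-/

open Matrix

section Congruence

variable {K ι κ : Type*} [CommRing K] [Fintype ι] [Fintype κ]
  {A S : Matrix ι κ K} {U W : Matrix ι ι K} {V P : Matrix κ κ K}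

theorem Matrix.transpose_mul_transpose_mul_eq (hAV : A * V = U * S) :
    Vᵀ * (Aᵀ * W) = Sᵀ * (Uᵀ * W) := by
  rw [← Matrix.mul_assoc, ← transpose_mul, hAV, transpose_mul, Matrix.mul_assoc]

variable [DecidableEq ι]

theorem Matrix.mul_eq_mul_of_inv_mul_mul_eq (hU : Uᵀ * W * U = 1) (h : U⁻¹ * A * V = S) :
    A * V = U * S := by
  rw [← h, Matrix.mul_assoc, mul_nonsing_inv_cancel_left _ _ (isUnit_det_of_left_inverse hU)]

theorem Matrix.transpose_mul_normalMatrix_mul [DecidableEq κ] (hAV : A * V = U * S)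
    (hU : Uᵀ * W * U = 1) (hV : Vᵀ * P * V = 1) (t : K) :
    Vᵀ * (Aᵀ * W * A + t • P) * V = Sᵀ * S + t • 1 := by
  have hA : Vᵀ * (Aᵀ * W * A) * V = Sᵀ * S := calc
    Vᵀ * (Aᵀ * W * A) * V = (A * V)ᵀ * W * (A * V) := by
      simp only [transpose_mul, Matrix.mul_assoc]
    _ = Sᵀ * (Uᵀ * W * U) * S := by
      simp only [hAV, transpose_mul, Matrix.mul_assoc]
    _ = Sᵀ * S := by rw [hU, Matrix.mul_one]
  rw [Matrix.mul_add, Matrix.add_mul, hA, Matrix.mul_smul, Matrix.smul_mul, hV]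

theorem Matrix.normalMatrix_mulVec_mulVec_eq [DecidableEq κ] (hAV : A * V = U * S)
    (hU : Uᵀ * W * U = 1) (hV : Vᵀ * P * V = 1) {t : K} {b : ι → K} {c : κ → K}
    (hc : (Sᵀ * S + t • 1) *ᵥ c = Sᵀ *ᵥ ((Uᵀ * W) *ᵥ b)) :
    (Aᵀ * W * A + t • P) *ᵥ (V *ᵥ c) = (Aᵀ * W) *ᵥ b := by
  -- `Vᵀ` has the right inverse `P * V`, hence also a left inverse, so it can be cancelled.
  have hVinv : P * V * Vᵀ = 1 := mul_eq_one_comm.mp (by rwa [← Matrix.mul_assoc])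
  have hcancel : Function.LeftInverse (P * V).mulVec Vᵀ.mulVec := fun x => by
    rw [mulVec_mulVec, hVinv, one_mulVec]
  refine hcancel.injective ?_
  calc Vᵀ *ᵥ ((Aᵀ * W * A + t • P) *ᵥ (V *ᵥ c))
      = (Vᵀ * (Aᵀ * W * A + t • P) * V) *ᵥ c := by
        rw [mulVec_mulVec, mulVec_mulVec, Matrix.mul_assoc]
    _ = Sᵀ *ᵥ ((Uᵀ * W) *ᵥ b) := by rw [transpose_mul_normalMatrix_mul hAV hU hV, hc]
    _ = Vᵀ *ᵥ ((Aᵀ * W) *ᵥ b) := by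
      rw [mulVec_mulVec, mulVec_mulVec, transpose_mul_transpose_mul_eq hAV]

end Congruence

section RectangularDiagonal

variable {K : Type*} [Semiring K] {m n : ℕ} {S : Matrix (Fin m) (Fin n) K}

theorem Matrix.mulVec_apply_castLE (hmn : n ≤ m)
    (hS : ∀ (i : Fin m) (j : Fin n), (i : ℕ) ≠ (j : ℕ) → S i j = 0)
    (x : Fin n → K) (j : Fin n) :
    (S *ᵥ x) (Fin.castLE hmn j) = S (Fin.castLE hmn j) j * x j := by
  refine Finset.sum_eq_single j (fun k _ hkj => ?_) (fun h => absurd (Finset.mem_univ _) h)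
  exact mul_eq_zero_of_left (hS _ _ (by simpa [Fin.val_eq_val] using hkj.symm)) _

theorem Matrix.transpose_mulVec_apply_castLE (hmn : n ≤ m)
    (hS : ∀ (i : Fin m) (j : Fin n), (i : ℕ) ≠ (j : ℕ) → S i j = 0) (y : Fin m → K) (j : Fin n) :
    (Sᵀ *ᵥ y) j = S (Fin.castLE hmn j) j * y (Fin.castLE hmn j) := by
  refine Finset.sum_eq_single (Fin.castLE hmn j) (fun i _ hij => ?_)
    (fun h => absurd (Finset.mem_univ _) h)
  exact mul_eq_zero_of_left (hS _ _ (fun h => hij (Fin.ext h))) _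

end RectangularDiagonal

theorem stmt_10_general {m n : ℕ} (hmn : n ≤ m) (A : Matrix (Fin m) (Fin n) ℝ)
    (d : Fin m → ℝ) (μ : Fin n → ℝ)
    (R UR : Matrix (Fin m) (Fin m) ℝ) (Q VQ : Matrix (Fin n) (Fin n) ℝ)
    (Sg : Matrix (Fin m) (Fin n) ℝ)
    (lam : ℝ)
    (hUR : URᵀ * R⁻¹ * UR = 1) (hVQ : VQᵀ * Q⁻¹ * VQ = 1)
    (hGSVD : UR⁻¹ * A * VQ = Sg)
    (hdiag : ∀ (i : Fin m) (j : Fin n), (i : ℕ) ≠ (j : ℕ) → Sg i j = 0)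
    (hpos : ∀ j : Fin n, 0 < Sg (Fin.castLE hmn j) j) :
    (Aᵀ * R⁻¹ * A + lam ^ 2 • Q⁻¹) *ᵥ
        (μ + ∑ j : Fin n,
          ((Sg (Fin.castLE hmn j) j ^ 2 / (Sg (Fin.castLE hmn j) j ^ 2 + lam ^ 2)) *
            (((fun i : Fin m => UR i (Fin.castLE hmn j)) ⬝ᵥ (R⁻¹ *ᵥ (d - A *ᵥ μ))) /
              Sg (Fin.castLE hmn j) j)) • (fun i : Fin n => VQ i j))
      = (Aᵀ * R⁻¹) *ᵥ d + lam ^ 2 • (Q⁻¹ *ᵥ μ) := by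
  set c : Fin n → ℝ := fun j =>
    (Sg (Fin.castLE hmn j) j ^ 2 / (Sg (Fin.castLE hmn j) j ^ 2 + lam ^ 2)) *
      (((fun i : Fin m => UR i (Fin.castLE hmn j)) ⬝ᵥ (R⁻¹ *ᵥ (d - A *ᵥ μ))) /
        Sg (Fin.castLE hmn j) j)
  have hsum : ∑ j, c j • (fun i => VQ i j) = VQ *ᵥ c := by
    ext i
    simp [mulVec, dotProduct, Finset.sum_apply, mul_comm]
  have hc : (Sgᵀ * Sg + lam ^ 2 • 1) *ᵥ c = Sgᵀ *ᵥ ((URᵀ * R⁻¹) *ᵥ (d - A *ᵥ μ)) := by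
    funext j
    have hσ := (hpos j).ne'
    have hden : Sg (Fin.castLE hmn j) j ^ 2 + lam ^ 2 ≠ 0 := by positivity
    rw [add_mulVec, ← mulVec_mulVec, smul_mulVec, one_mulVec, Pi.add_apply, Pi.smul_apply,
      transpose_mulVec_apply_castLE hmn hdiag, transpose_mulVec_apply_castLE hmn hdiag,
      mulVec_apply_castLE hmn hdiag, ← mulVec_mulVec, smul_eq_mul]
    simp only [c]
    field_simp
    rfl
  have hnormal := normalMatrix_mulVec_mulVec_eq (mul_eq_mul_of_inv_mul_mul_eq hUR hGSVD) hUR hVQ hc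
  rw [hsum, mulVec_add, hnormal, mulVec_sub, add_mulVec, smul_mulVec, ← mulVec_mulVec]
  abel

theorem stmt_10 {m n : ℕ} (hmn : n ≤ m) (A : Matrix (Fin m) (Fin n) ℝ)
    (d : Fin m → ℝ) (μ : Fin n → ℝ)
    (R UR : Matrix (Fin m) (Fin m) ℝ) (Q VQ : Matrix (Fin n) (Fin n) ℝ)
    (Sg : Matrix (Fin m) (Fin n) ℝ)
    (hR : R.PosDef) (hQ : Q.PosDef) (lam : ℝ)
    (hURu : IsUnit UR) (hVQu : IsUnit VQ)
    (hUR : URᵀ * R⁻¹ * UR = 1) (hVQ : VQᵀ * Q⁻¹ * VQ = 1)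
    (hGSVD : UR⁻¹ * A * VQ = Sg)
    (hdiag : ∀ (i : Fin m) (j : Fin n), (i : ℕ) ≠ (j : ℕ) → Sg i j = 0)
    (hpos : ∀ j : Fin n, 0 < Sg (Fin.castLE hmn j) j) :
    (Aᵀ * R⁻¹ * A + lam ^ 2 • Q⁻¹) *ᵥ
        (μ + ∑ j : Fin n,
          ((Sg (Fin.castLE hmn j) j ^ 2 / (Sg (Fin.castLE hmn j) j ^ 2 + lam ^ 2)) *
            (((fun i : Fin m => UR i (Fin.castLE hmn j)) ⬝ᵥ (R⁻¹ *ᵥ (d - A *ᵥ μ))) /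
              Sg (Fin.castLE hmn j) j)) • (fun i : Fin n => VQ i j))
      = (Aᵀ * R⁻¹) *ᵥ d + lam ^ 2 • (Q⁻¹ *ᵥ μ) :=
  stmt_10_general hmn A d μ R UR Q VQ Sg lam hUR hVQ hGSVD hdiag hpos
end

section
/- Let A ∈ ℝ^{m×n}, b ∈ ℝ^m, and let R ∈ ℝ^{m×m}, Q ∈ ℝ^{n×n} be symmetric positive definite. Suppose vectors u_1, ..., u_{k+1} ∈ ℝ^m, v_1, ..., v_{k+1} ∈ ℝ^n and positive scalars β_1, ..., β_{k+1}, α_1, ..., α_{k+1} satisfy the generalized Golub–Kahan recurrences: β_1 u_1 = b, α_1 v_1 = Aᵀ R⁻¹ u_1, β_{i+1} u_{i+1} = A Q v_i − α_i u_i and α_{i+1} v_{i+1} = Aᵀ R⁻¹ u_{i+1} − β_{i+1} v_i for i = 1, ..., k, together with the normalizations u_iᵀ R⁻¹ u_i = 1 and v_iᵀ Q v_i = 1 for all i. Then u_iᵀ R⁻¹ u_j = 0 and v_iᵀ Q v_j = 0 for all i ≠ j; i.e., writing U_{k+1} = [u_1, ..., u_{k+1}] and V_{k+1} = [v_1, ...,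 v_{k+1}], one has U_{k+1}ᵀ R⁻¹ U_{k+1} = I_{k+1} and V_{k+1}ᵀ Q V_{k+1} = I_{k+1}. -/
open Matrix

theorem stmt_11 {m n k : ℕ} (A : Matrix (Fin m) (Fin n) ℝ) (b : Fin m → ℝ)
    (R : Matrix (Fin m) (Fin m) ℝ) (Q : Matrix (Fin n) (Fin n) ℝ)
    (hR : R.PosDef) (hQ : Q.PosDef)
    (u : Fin (k + 1) → Fin m → ℝ) (v : Fin (k + 1) → Fin n → ℝ)
    (β α : Fin (k + 1) → ℝ)
    (hβpos : ∀ i, 0 < β i) (hαpos : ∀ i, 0 < α i)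
    (hinit_u : β 0 • u 0 = b)
    (hinit_v : α 0 • v 0 = (Aᵀ * R⁻¹) *ᵥ u 0)
    (hrec_u : ∀ i : Fin k,
        β i.succ • u i.succ = (A * Q) *ᵥ v i.castSucc - α i.castSucc • u i.castSucc)
    (hrec_v : ∀ i : Fin k,
        α i.succ • v i.succ = (Aᵀ * R⁻¹) *ᵥ u i.succ - β i.succ • v i.castSucc)
    (hnorm_u : ∀ i, u i ⬝ᵥ (R⁻¹ *ᵥ u i) = 1)
    (hnorm_v : ∀ i, v i ⬝ᵥ (Q *ᵥ v i) = 1) :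
    ∀ i j : Fin (k + 1), i ≠ j →
      u i ⬝ᵥ (R⁻¹ *ᵥ u j) = 0 ∧ v i ⬝ᵥ (Q *ᵥ v j) = 0 := by
  have hQs : Qᵀ = Q := by
    rw [← Matrix.conjTranspose_eq_transpose_of_trivial]; exact hQ.isHermitian.eq
  have hRs : Rᵀ = R := by
    rw [← Matrix.conjTranspose_eq_transpose_of_trivial]; exact hR.isHermitian.eq
  have hRinv : (R⁻¹)ᵀ = R⁻¹ := by
    rw [Matrix.transpose_nonsing_inv, hRs]
  have dotM : ∀ {p q : ℕ} (M : Matrix (Fin p) (Fin q) ℝ) (x : Fin q → ℝ) (y : Fin p → ℝ),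
      (M *ᵥ x) ⬝ᵥ y = x ⬝ᵥ (Mᵀ *ᵥ y) := by
    intro p q M x y
    rw [Matrix.dotProduct_mulVec, Matrix.vecMul_transpose]
  have adj1 : ∀ (x : Fin n → ℝ) (y : Fin m → ℝ),
      y ⬝ᵥ (R⁻¹ *ᵥ ((A * Q) *ᵥ x)) = ((Aᵀ * R⁻¹) *ᵥ y) ⬝ᵥ (Q *ᵥ x) := by
    intro x y
    rw [dotM, Matrix.mulVec_mulVec, Matrix.mulVec_mulVec, Matrix.transpose_mul,
      Matrix.transpose_transpose, hRinv, Matrix.mul_assoc]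
  have adj2 : ∀ (x : Fin n → ℝ) (y : Fin m → ℝ),
      x ⬝ᵥ (Q *ᵥ ((Aᵀ * R⁻¹) *ᵥ y)) = ((A * Q) *ᵥ x) ⬝ᵥ (R⁻¹ *ᵥ y) := by
    intro x y
    rw [dotM, Matrix.mulVec_mulVec, Matrix.mulVec_mulVec, Matrix.transpose_mul,
      hQs, Matrix.mul_assoc]
  have symu : ∀ a c : Fin (k + 1), u a ⬝ᵥ (R⁻¹ *ᵥ u c) = u c ⬝ᵥ (R⁻¹ *ᵥ u a) := by
    intro a c
    rw [dotProduct_comm, dotM, hRinv]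
  have symv : ∀ a c : Fin (k + 1), v a ⬝ᵥ (Q *ᵥ v c) = v c ⬝ᵥ (Q *ᵥ v a) := by
    intro a c
    rw [dotProduct_comm, dotM, hQs]
  have key : ∀ j : ℕ, ∀ hjk : j < k + 1, ∀ i : Fin (k + 1), (i : ℕ) < j →
      u i ⬝ᵥ (R⁻¹ *ᵥ u ⟨j, hjk⟩) = 0 ∧ v i ⬝ᵥ (Q *ᵥ v ⟨j, hjk⟩) = 0 := by
    intro j
    induction j using Nat.strong_induction_on with
    | _ j IH =>
      intro hjk i hij
      obtain ⟨j', rfl⟩ : ∃ j'', j = j'' + 1 := ⟨j - 1, by omega⟩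
      have hj'k : j' < k := by omega
      have hj'k1 : j' < k + 1 := by omega
      have hrecu : β ⟨j' + 1, hjk⟩ • u ⟨j' + 1, hjk⟩ =
          (A * Q) *ᵥ v ⟨j', hj'k1⟩ - α ⟨j', hj'k1⟩ • u ⟨j', hj'k1⟩ := by
        simpa [Fin.succ_mk, Fin.castSucc_mk] using hrec_u ⟨j', hj'k⟩
      have hrecv : α ⟨j' + 1, hjk⟩ • v ⟨j' + 1, hjk⟩ =
          (Aᵀ * R⁻¹) *ᵥ u ⟨j' + 1, hjk⟩ - β ⟨j' + 1, hjk⟩ • v ⟨j', hj'k1⟩ := by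
        simpa [Fin.succ_mk, Fin.castSucc_mk] using hrec_v ⟨j', hj'k⟩
      -- u orthogonality at level j'+1
      have hu : ∀ i : Fin (k + 1), (i : ℕ) < j' + 1 →
          u i ⬝ᵥ (R⁻¹ *ᵥ u ⟨j' + 1, hjk⟩) = 0 := by
        intro i hi
        have hmain := congrArg (fun w => u i ⬝ᵥ (R⁻¹ *ᵥ w)) hrecu
        simp only [Matrix.mulVec_smul, Matrix.mulVec_sub, dotProduct_smul,
          dotProduct_sub, smul_eq_mul] at hmain
        rw [adj1] at hmain
        obtain ⟨iv, hivlt⟩ := i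
        have hiv : iv < j' + 1 := hi
        have hβne : β ⟨j' + 1, hjk⟩ ≠ 0 := (hβpos _).ne'
        rcases Nat.eq_zero_or_pos iv with h0 | hpos
        · subst h0
          have h00 : (⟨0, hivlt⟩ : Fin (k + 1)) = 0 := rfl
          rw [h00, ← hinit_v] at hmain
          simp only [smul_dotProduct, smul_eq_mul] at hmain
          rcases Nat.eq_zero_or_pos j' with hj0 | hjpos
          · subst hj0
            have h01 : (⟨0, hj'k1⟩ : Fin (k + 1)) = 0 := rfl
            rw [h01, hnorm_v 0, hnorm_u 0] at hmain
            have h0' : β ⟨0 + 1, hjk⟩ * (u 0 ⬝ᵥ R⁻¹ *ᵥ u ⟨0 + 1, hjk⟩) = 0 :=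
              hmain.trans (by ring)
            exact (mul_eq_zero.mp h0').resolve_left hβne
          · have hv0 := (IH j' (by omega) hj'k1 0 (by simpa using hjpos)).2
            have hu0 := (IH j' (by omega) hj'k1 0 (by simpa using hjpos)).1
            rw [hv0, hu0] at hmain
            have h0' : β ⟨j' + 1, hjk⟩ * (u 0 ⬝ᵥ R⁻¹ *ᵥ u ⟨j' + 1, hjk⟩) = 0 :=
              hmain.trans (by ring)
            exact (mul_eq_zero.mp h0').resolve_left hβne
        · obtain ⟨i', rfl⟩ : ∃ i'', iv = i'' + 1 := ⟨iv - 1, by omega⟩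
          have hi'k : i' < k := by omega
          have hATu : (Aᵀ * R⁻¹) *ᵥ u ⟨i' + 1, hivlt⟩ =
              α ⟨i' + 1, hivlt⟩ • v ⟨i' + 1, hivlt⟩ + β ⟨i' + 1, hivlt⟩ • v ⟨i', by omega⟩ := by
            have h := hrec_v ⟨i', hi'k⟩
            simp only [Fin.succ_mk, Fin.castSucc_mk] at h
            rw [eq_sub_iff_add_eq] at h
            exact h.symm
          rw [hATu] at hmain
          simp only [add_dotProduct, smul_dotProduct, smul_eq_mul] at hmain
          rcases Nat.lt_or_ge (i' + 1) j' with hlt | hge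
          · have e1 := (IH j' (by omega) hj'k1 ⟨i' + 1, by omega⟩ hlt).2
            have e2 := (IH j' (by omega) hj'k1 ⟨i', by omega⟩ (by omega : i' < j')).2
            have e3 := (IH j' (by omega) hj'k1 ⟨i' + 1, by omega⟩ hlt).1
            rw [e1, e2, e3] at hmain
            have h0' : β ⟨j' + 1, hjk⟩ *
                (u ⟨i' + 1, hivlt⟩ ⬝ᵥ R⁻¹ *ᵥ u ⟨j' + 1, hjk⟩) = 0 := hmain.trans (by ring)
            exact (mul_eq_zero.mp h0').resolve_left hβne
          · have hfin : (⟨i' + 1, hivlt⟩ : Fin (k + 1)) = ⟨j', hj'k1⟩ :=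
              Fin.ext (by omega : i' + 1 = j')
            rw [hfin] at hmain
            have e2 := (IH j' (by omega) hj'k1 ⟨i', by omega⟩ (by omega : i' < j')).2
            rw [hnorm_v, hnorm_u, e2] at hmain
            have h0' : β ⟨j' + 1, hjk⟩ *
                (u ⟨j', hj'k1⟩ ⬝ᵥ R⁻¹ *ᵥ u ⟨j' + 1, hjk⟩) = 0 := hmain.trans (by ring)
            rw [← hfin] at h0'
            exact (mul_eq_zero.mp h0').resolve_left hβne
      -- v orthogonality at level j'+1
      have hv : ∀ i : Fin (k + 1), (i : ℕ) < j' + 1 →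
          v i ⬝ᵥ (Q *ᵥ v ⟨j' + 1, hjk⟩) = 0 := by
        intro i hi
        have hmain := congrArg (fun w => v i ⬝ᵥ (Q *ᵥ w)) hrecv
        simp only [Matrix.mulVec_smul, Matrix.mulVec_sub, dotProduct_smul,
          dotProduct_sub, smul_eq_mul] at hmain
        rw [adj2] at hmain
        obtain ⟨iv, hivlt⟩ := i
        have hiv : iv < j' + 1 := hi
        have hαne : α ⟨j' + 1, hjk⟩ ≠ 0 := (hαpos _).ne'
        have hivk : iv < k := by omega
        have hAQv : (A * Q) *ᵥ v ⟨iv, hivlt⟩ =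
            β ⟨iv + 1, by omega⟩ • u ⟨iv + 1, by omega⟩ + α ⟨iv, hivlt⟩ • u ⟨iv, hivlt⟩ := by
          have h := hrec_u ⟨iv, hivk⟩
          simp only [Fin.succ_mk, Fin.castSucc_mk] at h
          rw [eq_sub_iff_add_eq] at h
          exact h.symm
        rw [hAQv] at hmain
        simp only [add_dotProduct, smul_dotProduct, smul_eq_mul] at hmain
        rcases Nat.lt_or_ge iv j' with hlt | hge
        · have e1 := hu ⟨iv + 1, by omega⟩ (by omega : iv + 1 < j' + 1)
          have e2 := hu ⟨iv, by omega⟩ (by omega : iv < j' + 1)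
          have e3 := (IH j' (by omega) hj'k1 ⟨iv, by omega⟩ hlt).2
          rw [e1, e2, e3] at hmain
          have h0' : α ⟨j' + 1, hjk⟩ *
              (v ⟨iv, hivlt⟩ ⬝ᵥ Q *ᵥ v ⟨j' + 1, hjk⟩) = 0 := hmain.trans (by ring)
          exact (mul_eq_zero.mp h0').resolve_left hαne
        · have hfin1 : (⟨iv + 1, by omega⟩ : Fin (k + 1)) = ⟨j' + 1, hjk⟩ :=
            Fin.ext (by omega : iv + 1 = j' + 1)
          have hfin2 : (⟨iv, hivlt⟩ : Fin (k + 1)) = ⟨j', hj'k1⟩ :=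
            Fin.ext (by omega : iv = j')
          rw [hfin1, hfin2] at hmain
          have e2 := hu ⟨j', hj'k1⟩ (by omega : j' < j' + 1)
          rw [hnorm_u, hnorm_v, e2] at hmain
          have h0' : α ⟨j' + 1, hjk⟩ *
              (v ⟨j', hj'k1⟩ ⬝ᵥ Q *ᵥ v ⟨j' + 1, hjk⟩) = 0 := hmain.trans (by ring)
          rw [← hfin2] at h0'
          exact (mul_eq_zero.mp h0').resolve_left hαne
      exact ⟨hu i hij, hv i hij⟩
  intro i j hij
  rcases lt_or_gt_of_ne hij with h | h
  · exact key j.1 j.isLt i h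
  · have hk := key i.1 i.isLt j h
    exact ⟨(symu i j).trans hk.1, (symv i j).trans hk.2⟩
end

section
/- Let A ∈ ℝ^{m×n}, let R ∈ ℝ^{m×m} and Q ∈ ℝ^{n×n} be symmetric positive definite, and let λ ∈ ℝ. Let B_k ∈ ℝ^{(k+1)×k} be the lower bidiagonal matrix with diagonal entries α_1, ..., α_k and subdiagonal entries β_2, ..., β_{k+1}, let V_k = [v_1, ..., v_k] ∈ ℝ^{n×k}, V_{k+1} = [V_k, v_{k+1}], U_{k+1} ∈ ℝ^{m×(k+1)}, and suppose the gen-GK relations hold: A Q V_k = U_{k+1} B_k and Aᵀ R⁻¹ U_{k+1} = V_k B_kᵀ + α_{k+1} v_{k+1} e_{k+1}ᵀ. Then (Aᵀ R⁻¹ A Q + λ² I_n) V_k = V_{k+1} ( B̄_k + λ² [I_k; 0_{1×k}] ), where B̄_k ∈ ℝ^{(k+1)×k} is the matrix with top k×k block B_kᵀ B_k and last row β_{k+1} α_{k+1} e_kᵀ. -/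
open Matrix

theorem stmt_13 {m n k : ℕ} (hk : 0 < k) (A : Matrix (Fin m) (Fin n) ℝ)
    (R : Matrix (Fin m) (Fin m) ℝ) (Q : Matrix (Fin n) (Fin n) ℝ)
    (hR : R.PosDef) (hQ : Q.PosDef) (lam : ℝ)
    (αs βs : Fin k → ℝ) (ak1 : ℝ)
    (B : Matrix (Fin (k + 1)) (Fin k) ℝ)
    (hB : ∀ i j, B i j =
        if (i : ℕ) = (j : ℕ) then αs j else if (i : ℕ) = (j : ℕ) + 1 then βs j else 0)
    (Vk : Matrix (Fin n) (Fin k) ℝ) (vk1 : Fin n → ℝ)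
    (Uk1 : Matrix (Fin m) (Fin (k + 1)) ℝ)
    (hAQV : A * Q * Vk = Uk1 * B)
    (hATU : Aᵀ * R⁻¹ * Uk1
        = Vk * Bᵀ + ak1 • vecMulVec vk1 (Pi.single (Fin.last k) 1)) :
    (Aᵀ * R⁻¹ * A * Q + lam ^ 2 • (1 : Matrix (Fin n) (Fin n) ℝ)) * Vk
      = (Matrix.of fun i : Fin n => Fin.snoc (Vk i) (vk1 i)) *
        ((Matrix.of fun (i : Fin (k + 1)) (j : Fin k) =>
            if h : (i : ℕ) < k then (Bᵀ * B) ⟨i, h⟩ j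
            else if (j : ℕ) = k - 1 then βs ⟨k - 1, Nat.sub_lt hk Nat.one_pos⟩ * ak1 else 0) +
          lam ^ 2 • Matrix.of fun (i : Fin (k + 1)) (j : Fin k) =>
            if (i : ℕ) = (j : ℕ) then (1 : ℝ) else 0) := by
  have key : (Aᵀ * R⁻¹ * A * Q + lam ^ 2 • (1 : Matrix (Fin n) (Fin n) ℝ)) * Vk
      = Vk * (Bᵀ * B) + ak1 • (vecMulVec vk1 (Pi.single (Fin.last k) 1) * B)
        + lam ^ 2 • Vk := by
    rw [Matrix.add_mul, Matrix.smul_mul, Matrix.one_mul, Matrix.mul_assoc (Aᵀ * R⁻¹ * A),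
      Matrix.mul_assoc (Aᵀ * R⁻¹), ← Matrix.mul_assoc A, hAQV, ← Matrix.mul_assoc, hATU, Matrix.add_mul, Matrix.smul_mul, Matrix.mul_assoc]
  rw [key]
  ext i j
  have hjk : (j : ℕ) < k := j.isLt
  have hkj : ¬ ((k : ℕ) = (j : ℕ)) := by omega
  have hBlast : B (Fin.last k) j
      = if (j : ℕ) = k - 1 then βs ⟨k - 1, Nat.sub_lt hk Nat.one_pos⟩ else 0 := by
    rw [hB]
    simp only [Fin.val_last]
    by_cases h : (j : ℕ) = k - 1
    · rw [if_neg (by omega), if_pos (by omega), if_pos h]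
      congr 1
      exact Fin.ext h
    · rw [if_neg (by omega), if_neg (by omega), if_neg h]
  simp only [Matrix.add_apply, Matrix.smul_apply, Matrix.mul_apply, Matrix.of_apply,
    vecMulVec_apply, smul_eq_mul, Pi.single_apply, Fin.sum_univ_castSucc,
    Fin.snoc_castSucc, Fin.snoc_last, Fin.coe_castSucc, Fin.val_last,
    Fin.is_lt, dite_true, Fin.eta, mul_ite, ite_mul, mul_one, mul_zero, zero_mul, one_mul,
    Fin.val_eq_val, Finset.sum_ite_eq, Finset.sum_ite_eq', Finset.mem_univ, if_true,
    if_neg hkj, mul_add, Finset.sum_add_distrib]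
  rw [hBlast]
  ring_nf
  rw [dif_neg (lt_irrefl k)]
  split_ifs <;> ring
end

section
/- Let A ∈ ℝ^{m×n}, b ∈ ℝ^m with b ≠ 0, and let R ∈ ℝ^{m×m}, Q ∈ ℝ^{n×n} be symmetric positive definite. Suppose vectors u_1, ..., u_{k+1} ∈ ℝ^m, v_1, ..., v_{k+1} ∈ ℝ^n and positive scalars α_i, β_i satisfy the generalized Golub–Kahan recurrences: β_1 u_1 = b, α_1 v_1 = Aᵀ R⁻¹ u_1, β_{i+1} u_{i+1} = A Q v_i − α_i u_i and α_{i+1} v_{i+1} = Aᵀ R⁻¹ u_{i+1} − β_{i+1} v_i for i = 1, ..., k. Then for every 1 ≤ j ≤ k+1: span{u_1, ..., u_j} = K_j(A Q Aᵀ R⁻¹, b) and span{v_1, ..., v_j} = K_j(Aᵀ R⁻¹ A Q, Aᵀ R⁻¹ b). -/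
open Matrix

lemma semiconj_pow_aux {m n : ℕ} (X : Matrix (Fin m) (Fin n) ℝ)
    (Y : Matrix (Fin n) (Fin m) ℝ) : ∀ q : ℕ, X * (Y * X) ^ q = (X * Y) ^ q * X := by
  intro q
  induction q with
  | zero => simp
  | succ q ih =>
    rw [pow_succ, ← Matrix.mul_assoc, ih, pow_succ]
    simp [Matrix.mul_assoc]

lemma krylov_mono {n : ℕ} (C : Matrix (Fin n) (Fin n) ℝ) (g : Fin n → ℝ) {a b : ℕ}
    (h : a ≤ b) : krylov C g a ≤ krylov C g b := by
  apply Submodule.span_le.2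
  rintro x ⟨q, rfl⟩
  exact Submodule.subset_span ⟨⟨(q : ℕ), lt_of_lt_of_le q.2 h⟩, rfl⟩

lemma pow_mulVec_mem_krylov {n : ℕ} (C : Matrix (Fin n) (Fin n) ℝ) (g : Fin n → ℝ)
    {q kk : ℕ} (h : q < kk) : (C ^ q) *ᵥ g ∈ krylov C g kk :=
  Submodule.subset_span ⟨⟨q, h⟩, rfl⟩

theorem stmt_14 {m n k : ℕ} (A : Matrix (Fin m) (Fin n) ℝ) (b : Fin m → ℝ) (hb : b ≠ 0)
    (R : Matrix (Fin m) (Fin m) ℝ) (Q : Matrix (Fin n) (Fin n) ℝ)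
    (hR : R.PosDef) (hQ : Q.PosDef)
    (u : Fin (k + 1) → Fin m → ℝ) (v : Fin (k + 1) → Fin n → ℝ)
    (β α : Fin (k + 1) → ℝ)
    (hβpos : ∀ i, 0 < β i) (hαpos : ∀ i, 0 < α i)
    (hinit_u : β 0 • u 0 = b)
    (hinit_v : α 0 • v 0 = (Aᵀ * R⁻¹) *ᵥ u 0)
    (hrec_u : ∀ i : Fin k,
        β i.succ • u i.succ = (A * Q) *ᵥ v i.castSucc - α i.castSucc • u i.castSucc)
    (hrec_v : ∀ i : Fin k,
        α i.succ • v i.succ = (Aᵀ * R⁻¹) *ᵥ u i.succ - β i.succ • v i.castSucc) :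
    ∀ j : ℕ, 1 ≤ j → j ≤ k + 1 →
      Submodule.span ℝ {x : Fin m → ℝ | ∃ i : Fin (k + 1), (i : ℕ) < j ∧ x = u i}
          = krylov (A * Q * Aᵀ * R⁻¹) b j ∧
      Submodule.span ℝ {x : Fin n → ℝ | ∃ i : Fin (k + 1), (i : ℕ) < j ∧ x = v i}
          = krylov (Aᵀ * R⁻¹ * A * Q) ((Aᵀ * R⁻¹) *ᵥ b) j := by
  set S : Matrix (Fin m) (Fin n) ℝ := A * Q with hS
  set T : Matrix (Fin n) (Fin m) ℝ := Aᵀ * R⁻¹ with hT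
  set g : Fin n → ℝ := T *ᵥ b with hg
  have hCu : A * Q * Aᵀ * R⁻¹ = S * T := Matrix.mul_assoc _ _ _
  have hCv : Aᵀ * R⁻¹ * A * Q = T * S := Matrix.mul_assoc _ _ _
  have hβne : ∀ i, β i ≠ 0 := fun i => (hβpos i).ne'
  have hαne : ∀ i, α i ≠ 0 := fun i => (hαpos i).ne'
  -- key mulVec identities
  have key1 : ∀ q : ℕ, S *ᵥ ((T * S) ^ q *ᵥ g) = (S * T) ^ (q + 1) *ᵥ b := by
    intro q
    rw [hg, mulVec_mulVec, mulVec_mulVec, semiconj_pow_aux, Matrix.mul_assoc, ← pow_succ]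
  have key2 : ∀ q : ℕ, T *ᵥ ((S * T) ^ q *ᵥ b) = (T * S) ^ q *ᵥ g := by
    intro q
    rw [hg, mulVec_mulVec, mulVec_mulVec, semiconj_pow_aux]
  -- pushing krylov membership through S and T
  have hmapS : ∀ (kk : ℕ) (x), x ∈ krylov (T * S) g kk → S *ᵥ x ∈ krylov (S * T) b (kk + 1) := by
    intro kk x hx
    have hle : (krylov (T * S) g kk).map S.mulVecLin ≤ krylov (S * T) b (kk + 1) := by
      rw [krylov, Submodule.map_span_le]
      rintro y ⟨q, rfl⟩
      simp only [mulVecLin_apply]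
      rw [key1]
      exact pow_mulVec_mem_krylov _ _ (Nat.succ_lt_succ q.2)
    exact hle (Submodule.mem_map_of_mem hx)
  have hmapT : ∀ (kk : ℕ) (x), x ∈ krylov (S * T) b kk → T *ᵥ x ∈ krylov (T * S) g kk := by
    intro kk x hx
    have hle : (krylov (S * T) b kk).map T.mulVecLin ≤ krylov (T * S) g kk := by
      rw [krylov, Submodule.map_span_le]
      rintro y ⟨q, rfl⟩
      simp only [mulVecLin_apply]
      rw [key2]
      exact pow_mulVec_mem_krylov _ _ q.2
    exact hle (Submodule.mem_map_of_mem hx)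
  -- forward direction: each u i, v i lies in the Krylov space
  have fwd : ∀ i : Fin (k + 1),
      u i ∈ krylov (S * T) b ((i : ℕ) + 1) ∧ v i ∈ krylov (T * S) g ((i : ℕ) + 1) := by
    intro i
    induction i using Fin.induction with
    | zero =>
      have hu0 : u 0 = (β 0)⁻¹ • b := by
        rw [← hinit_u, smul_smul, inv_mul_cancel₀ (hβne 0), one_smul]
      have hb1 : b ∈ krylov (S * T) b 1 := by
        have := pow_mulVec_mem_krylov (S * T) b (q := 0) (kk := 1) Nat.one_pos
        simpa using this
      constructor
      · rw [hu0]; exact Submodule.smul_mem _ _ hb1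
      · have h1 : α 0 • v 0 = (β 0)⁻¹ • g := by
          rw [hinit_v, hu0, mulVec_smul, ← hg]
        have hv0 : v 0 = (α 0)⁻¹ • ((β 0)⁻¹ • g) := by
          rw [← h1, smul_smul, inv_mul_cancel₀ (hαne 0), one_smul]
        rw [hv0]
        have hg1 : g ∈ krylov (T * S) g 1 := by
          have := pow_mulVec_mem_krylov (T * S) g (q := 0) (kk := 1) Nat.one_pos
          simpa using this
        exact Submodule.smul_mem _ _ (Submodule.smul_mem _ _ hg1)
    | succ i ih =>
      simp only [Fin.coe_castSucc] at ih
      simp only [Fin.val_succ]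
      have hu : u i.succ =
          (β i.succ)⁻¹ • (S *ᵥ v i.castSucc - α i.castSucc • u i.castSucc) := by
        rw [← hrec_u i, smul_smul, inv_mul_cancel₀ (hβne i.succ), one_smul]
      have humem : u i.succ ∈ krylov (S * T) b ((i : ℕ) + 1 + 1) := by
        rw [hu]
        refine Submodule.smul_mem _ _ (Submodule.sub_mem _ ?_ ?_)
        · exact hmapS _ _ ih.2
        · exact Submodule.smul_mem _ _ (krylov_mono _ _ (Nat.le_succ _) ih.1)
      refine ⟨humem, ?_⟩
      have hv : v i.succ = (α i.succ)⁻¹ • (T *ᵥ u i.succ - β i.succ • v i.castSucc) := by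
        rw [← hrec_v i, smul_smul, inv_mul_cancel₀ (hαne i.succ), one_smul]
      rw [hv]
      refine Submodule.smul_mem _ _ (Submodule.sub_mem _ ?_ ?_)
      · exact hmapT _ _ humem
      · exact Submodule.smul_mem _ _ (krylov_mono _ _ (Nat.le_succ _) ih.2)
  -- spans of the u's and v's
  set Uspan : ℕ → Submodule ℝ (Fin m → ℝ) := fun j =>
    Submodule.span ℝ {x : Fin m → ℝ | ∃ i : Fin (k + 1), (i : ℕ) < j ∧ x = u i} with hUspan
  set Vspan : ℕ → Submodule ℝ (Fin n → ℝ) := fun j =>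
    Submodule.span ℝ {x : Fin n → ℝ | ∃ i : Fin (k + 1), (i : ℕ) < j ∧ x = v i} with hVspan
  have hUmono : ∀ {a c : ℕ}, a ≤ c → Uspan a ≤ Uspan c := by
    intro a c h
    exact Submodule.span_mono (fun x ⟨i, hi, hx⟩ => ⟨i, lt_of_lt_of_le hi h, hx⟩)
  have hVmono : ∀ {a c : ℕ}, a ≤ c → Vspan a ≤ Vspan c := by
    intro a c h
    exact Submodule.span_mono (fun x ⟨i, hi, hx⟩ => ⟨i, lt_of_lt_of_le hi h, hx⟩)
  have humem : ∀ (i : Fin (k + 1)) (j : ℕ), (i : ℕ) < j → u i ∈ Uspan j :=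
    fun i j hij => Submodule.subset_span ⟨i, hij, rfl⟩
  have hvmem : ∀ (i : Fin (k + 1)) (j : ℕ), (i : ℕ) < j → v i ∈ Vspan j :=
    fun i j hij => Submodule.subset_span ⟨i, hij, rfl⟩
  -- backward direction: Krylov generators lie in the spans
  have bwd : ∀ i : Fin (k + 1),
      (S * T) ^ (i : ℕ) *ᵥ b ∈ Uspan ((i : ℕ) + 1) ∧
      (T * S) ^ (i : ℕ) *ᵥ g ∈ Vspan ((i : ℕ) + 1) := by
    intro i
    induction i using Fin.induction with
    | zero =>
      constructor
      · simp only [Fin.val_zero, pow_zero, one_mulVec, zero_add]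
        rw [← hinit_u]
        exact Submodule.smul_mem _ _ (humem 0 1 Nat.one_pos)
      · simp only [Fin.val_zero, pow_zero, one_mulVec, zero_add]
        have : g = β 0 • (α 0 • v 0) := by
          rw [hinit_v, hg, ← mulVec_smul, hinit_u]
        rw [this]
        exact Submodule.smul_mem _ _ (Submodule.smul_mem _ _ (hvmem 0 1 Nat.one_pos))
    | succ i ih =>
      simp only [Fin.coe_castSucc] at ih
      simp only [Fin.val_succ]
      have hb1 : (S * T) ^ ((i : ℕ) + 1) *ᵥ b ∈ Uspan ((i : ℕ) + 1 + 1) := by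
        rw [← key1]
        have hle : (Vspan ((i : ℕ) + 1)).map S.mulVecLin ≤ Uspan ((i : ℕ) + 1 + 1) := by
          simp only [hVspan, hUspan]
          rw [Submodule.map_span_le]
          rintro y ⟨t, ht, rfl⟩
          simp only [mulVecLin_apply]
          have htk : (t : ℕ) < k := lt_of_lt_of_le ht (Nat.succ_le_of_lt i.2)
          obtain ⟨t', rfl⟩ : ∃ t' : Fin k, t = t'.castSucc :=
            ⟨⟨(t : ℕ), htk⟩, Fin.ext (by simp)⟩
          have hrw : S *ᵥ v t'.castSucc
              = β t'.succ • u t'.succ + α t'.castSucc • u t'.castSucc := by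
            rw [hrec_u t', sub_add_cancel]
          simp only [Fin.coe_castSucc] at ht
          rw [hrw]
          refine Submodule.add_mem _ ?_ ?_
          · refine Submodule.smul_mem _ _ (Submodule.subset_span ⟨t'.succ, ?_, rfl⟩)
            simp only [Fin.val_succ]
            omega
          · refine Submodule.smul_mem _ _ (Submodule.subset_span ⟨t'.castSucc, ?_, rfl⟩)
            simp only [Fin.coe_castSucc]
            omega
        exact hle (Submodule.mem_map_of_mem ih.2)
      refine ⟨hb1, ?_⟩
      rw [← key2]
      have hle : (Uspan ((i : ℕ) + 1 + 1)).map T.mulVecLin ≤ Vspan ((i : ℕ) + 1 + 1) := by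
        simp only [hVspan, hUspan]
        rw [Submodule.map_span_le]
        rintro y ⟨t, ht, rfl⟩
        simp only [mulVecLin_apply]
        rcases Fin.eq_zero_or_eq_succ t with rfl | ⟨t', rfl⟩
        · have hrw : T *ᵥ u 0 = α 0 • v 0 := hinit_v.symm
          rw [hrw]
          exact Submodule.smul_mem _ _
            (Submodule.subset_span ⟨0, by simp, rfl⟩)
        · have hrw : T *ᵥ u t'.succ
              = α t'.succ • v t'.succ + β t'.succ • v t'.castSucc := by
            rw [hrec_v t', sub_add_cancel]
          rw [hrw]
          simp only [Fin.val_succ] at ht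
          refine Submodule.add_mem _ ?_ ?_
          · refine Submodule.smul_mem _ _ (Submodule.subset_span ⟨t'.succ, ?_, rfl⟩)
            simp only [Fin.val_succ]; omega
          · refine Submodule.smul_mem _ _ (Submodule.subset_span ⟨t'.castSucc, ?_, rfl⟩)
            simp only [Fin.coe_castSucc]; omega
      exact hle (Submodule.mem_map_of_mem hb1)
  -- assemble
  intro j hj1 hj2
  rw [hCu, hCv]
  constructor
  · apply le_antisymm
    · apply Submodule.span_le.2
      rintro x ⟨i, hi, rfl⟩
      exact krylov_mono _ _ (Nat.succ_le_of_lt hi) (fwd i).1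
    · rw [krylov]
      apply Submodule.span_le.2
      rintro x ⟨q, rfl⟩
      have hqk : (q : ℕ) < k + 1 := lt_of_lt_of_le q.2 hj2
      have := (bwd ⟨(q : ℕ), hqk⟩).1
      simp only at this
      exact hUmono (Nat.succ_le_of_lt q.2) this
  · apply le_antisymm
    · apply Submodule.span_le.2
      rintro x ⟨i, hi, rfl⟩
      exact krylov_mono _ _ (Nat.succ_le_of_lt hi) (fwd i).2
    · rw [krylov]
      apply Submodule.span_le.2
      rintro x ⟨q, rfl⟩
      have hqk : (q : ℕ) < k + 1 := lt_of_lt_of_le q.2 hj2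
      have := (bwd ⟨(q : ℕ), hqk⟩).2
      simp only at this
      exact hVmono (Nat.succ_le_of_lt q.2) this
end

section
/- Let A ∈ ℝ^{m×n}, b ∈ ℝ^m, let R ∈ ℝ^{m×m} and Q ∈ ℝ^{n×n} be symmetric positive definite, and let λ ∈ ℝ. Let B_k ∈ ℝ^{(k+1)×k}, V_k ∈ ℝ^{n×k}, U_{k+1} ∈ ℝ^{m×(k+1)}, β_1 > 0, and suppose b = β_1 U_{k+1} e_1, A Q V_k = U_{k+1} B_k, U_{k+1}ᵀ R⁻¹ U_{k+1} = I_{k+1}, and V_kᵀ Q V_k = I_k. Then for every z ∈ ℝ^k, ‖A Q V_k z − b‖_{R⁻¹}² + λ² ‖V_k z‖_Q² = ‖B_k z − β_1 e_1‖₂² + λ² ‖z‖₂². Consequently, the gen-LSQR problem min over x in the range of V_k of ½‖A Q x − b‖_{R⁻¹}² + (λ²/2)‖x‖_Q² is equivalent to the projected problem min over z ∈ ℝ^k of ½‖B_k z − β_1 e_1‖₂² + (λ²/2)‖z‖₂². -/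
open Matrix

lemma stmt_16_iso {p q : ℕ} (U : Matrix (Fin p) (Fin q) ℝ) (M : Matrix (Fin p) (Fin p) ℝ)
    (h : Uᵀ * M * U = 1) (w : Fin q → ℝ) :
    (U *ᵥ w) ⬝ᵥ (M *ᵥ (U *ᵥ w)) = w ⬝ᵥ w := by
  have h2 : (Uᵀ * M * U) *ᵥ w = Uᵀ *ᵥ (M *ᵥ (U *ᵥ w)) := by
    simp [mulVec_mulVec, Matrix.mul_assoc]
  have h3 : w ⬝ᵥ ((Uᵀ * M * U) *ᵥ w) = (U *ᵥ w) ⬝ᵥ (M *ᵥ (U *ᵥ w)) := by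
    rw [h2, dotProduct_mulVec, vecMul_transpose]
  rw [← h3, h, one_mulVec]

theorem stmt_16 {m n k : ℕ} (A : Matrix (Fin m) (Fin n) ℝ) (b : Fin m → ℝ)
    (R : Matrix (Fin m) (Fin m) ℝ) (Q : Matrix (Fin n) (Fin n) ℝ)
    (hR : R.PosDef) (hQ : Q.PosDef) (lam : ℝ)
    (B : Matrix (Fin (k + 1)) (Fin k) ℝ)
    (Vk : Matrix (Fin n) (Fin k) ℝ) (Uk1 : Matrix (Fin m) (Fin (k + 1)) ℝ)
    (β1 : ℝ) (hβ1 : 0 < β1)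
    (hb : b = β1 • (Uk1 *ᵥ (Pi.single 0 1 : Fin (k + 1) → ℝ)))
    (hAQV : A * Q * Vk = Uk1 * B)
    (hU : Uk1ᵀ * R⁻¹ * Uk1 = 1) (hV : Vkᵀ * Q * Vk = 1) :
    (∀ z : Fin k → ℝ,
      ((A * Q) *ᵥ (Vk *ᵥ z) - b) ⬝ᵥ (R⁻¹ *ᵥ ((A * Q) *ᵥ (Vk *ᵥ z) - b)) +
          lam ^ 2 * ((Vk *ᵥ z) ⬝ᵥ (Q *ᵥ (Vk *ᵥ z)))
        = (B *ᵥ z - β1 • (Pi.single 0 1 : Fin (k + 1) → ℝ)) ⬝ᵥ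
            (B *ᵥ z - β1 • (Pi.single 0 1 : Fin (k + 1) → ℝ)) +
          lam ^ 2 * (z ⬝ᵥ z)) ∧
    (∀ z0 : Fin k → ℝ,
      (∀ z : Fin k → ℝ,
          (1 / 2) * ((B *ᵥ z0 - β1 • (Pi.single 0 1 : Fin (k + 1) → ℝ)) ⬝ᵥ
              (B *ᵥ z0 - β1 • (Pi.single 0 1 : Fin (k + 1) → ℝ))) +
            (lam ^ 2 / 2) * (z0 ⬝ᵥ z0)
          ≤ (1 / 2) * ((B *ᵥ z - β1 • (Pi.single 0 1 : Fin (k + 1) → ℝ)) ⬝ᵥ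
              (B *ᵥ z - β1 • (Pi.single 0 1 : Fin (k + 1) → ℝ))) +
            (lam ^ 2 / 2) * (z ⬝ᵥ z)) ↔
      (∀ z : Fin k → ℝ,
          (1 / 2) * (((A * Q) *ᵥ (Vk *ᵥ z0) - b) ⬝ᵥ (R⁻¹ *ᵥ ((A * Q) *ᵥ (Vk *ᵥ z0) - b))) +
            (lam ^ 2 / 2) * ((Vk *ᵥ z0) ⬝ᵥ (Q *ᵥ (Vk *ᵥ z0)))
          ≤ (1 / 2) * (((A * Q) *ᵥ (Vk *ᵥ z) - b) ⬝ᵥ (R⁻¹ *ᵥ ((A * Q) *ᵥ (Vk *ᵥ z) - b))) +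
            (lam ^ 2 / 2) * ((Vk *ᵥ z) ⬝ᵥ (Q *ᵥ (Vk *ᵥ z))))) := by
  have key : ∀ z : Fin k → ℝ,
      ((A * Q) *ᵥ (Vk *ᵥ z) - b) ⬝ᵥ (R⁻¹ *ᵥ ((A * Q) *ᵥ (Vk *ᵥ z) - b)) +
          lam ^ 2 * ((Vk *ᵥ z) ⬝ᵥ (Q *ᵥ (Vk *ᵥ z)))
        = (B *ᵥ z - β1 • (Pi.single 0 1 : Fin (k + 1) → ℝ)) ⬝ᵥ
            (B *ᵥ z - β1 • (Pi.single 0 1 : Fin (k + 1) → ℝ)) +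
          lam ^ 2 * (z ⬝ᵥ z) := by
    intro z
    have hvec : (A * Q) *ᵥ (Vk *ᵥ z) - b
        = Uk1 *ᵥ (B *ᵥ z - β1 • (Pi.single 0 1 : Fin (k + 1) → ℝ)) := by
      rw [hb, mulVec_mulVec, hAQV, ← mulVec_mulVec, mulVec_sub, mulVec_smul]
    rw [hvec, stmt_16_iso Uk1 R⁻¹ hU, stmt_16_iso Vk Q hV]
  refine ⟨key, fun z0 => ?_⟩
  constructor
  · intro h z
    have h1 := key z0
    have h2 := key z
    have h3 := h z
    linarith
  · intro h z
    have h1 := key z0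
    have h2 := key z
    have h3 := h z
    linarith
end

section
/- Let A ∈ ℝ^{m×n}, b ∈ ℝ^m, let R ∈ ℝ^{m×m} and Q ∈ ℝ^{n×n} be symmetric positive definite, and let λ ∈ ℝ. With B_k ∈ ℝ^{(k+1)×k} lower bidiagonal (diagonal α_1, ..., α_k > 0, subdiagonal β_2, ..., β_{k+1} > 0), β_1 > 0, V_k ∈ ℝ^{n×k}, V_{k+1} = [V_k, v_{k+1}], U_{k+1} ∈ ℝ^{m×(k+1)}, assume b = β_1 U_{k+1} e_1, A Q V_k = U_{k+1} B_k, Aᵀ R⁻¹ U_{k+1} = V_k B_kᵀ + α_{k+1} v_{k+1} e_{k+1}ᵀ, and V_{k+1}ᵀ Q V_{k+1} = I_{k+1}. Then for every z ∈ ℝ^k, ‖Aᵀ R⁻¹ (A Q V_k z − b)‖_Q² + λ² ‖V_k z‖_Q² = ‖B̄_k z − β_1 α_1 e_1‖₂² + λ² ‖z‖₂², where B̄_k ∈ ℝ^{(k+1)×k} has top k×k block B_kᵀ B_k and last row β_{k+1} α_{k+1} e_kᵀ. Consequently the gen-LSMR problem over the range of V_k is equivalent to the projected problem min over z ∈ ℝ^k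 of ½‖B̄_k z − β_1 α_1 e_1‖₂² + (λ²/2)‖z‖₂². -/
/-!
Substituting `b = β₁ U_{k+1} e₁` and `A Q V_k = U_{k+1} B_k` writes the residual as
`U_{k+1} (B_k z - β₁ e₁)`; the second bidiagonalization relation then gives
`Aᵀ R⁻¹ (A Q V_k z - b) = V_{k+1} w` with `w = (B_kᵀ r, α_{k+1} r_{k+1})`, `r = B_k z - β₁ e₁`,
and the bidiagonal shape of `B_k` (first row `α₁ e₁ᵀ`, last row `β_{k+1} e_kᵀ`) identifies `w` with
`B̄_k z - β₁ α₁ e₁`. Since `V_{k+1}` is `Q`-orthonormal, `‖V_{k+1} w‖_Q = ‖w‖₂` and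
`‖V_k z‖_Q = ‖z‖₂`. The two objectives thus agree pointwise, so they have the same minimizers.
-/

open Matrix

section Snoc

variable {R ι : Type*} [CommRing R] {k : ℕ}

theorem of_snoc_mulVec_snoc [Fintype ι] (V : Matrix ι (Fin k) R) (v : ι → R) (y : Fin k → R)
    (c : R) :
    (Matrix.of fun i => Fin.snoc (V i) (v i) : Matrix ι (Fin (k + 1)) R) *ᵥ Fin.snoc y c
      = V *ᵥ y + c • v := by
  funext i
  simp [mulVec, dotProduct, Fin.sum_univ_castSucc, mul_comm]

theorem snoc_dotProduct_snoc (y y' : Fin k → R) (c c' : R) :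
    (Fin.snoc y c : Fin (k + 1) → R) ⬝ᵥ Fin.snoc y' c' = y ⬝ᵥ y' + c * c' := by
  simp [dotProduct, Fin.sum_univ_castSucc]

end Snoc

theorem dotProduct_mulVec_mulVec_of_transpose_mul_mul_eq_one {R ι κ : Type*} [CommRing R]
    [Fintype ι] [Fintype κ] [DecidableEq κ] {V : Matrix ι κ R} {Q : Matrix ι ι R}
    (hV : Vᵀ * Q * V = 1) (w : κ → R) :
    (V *ᵥ w) ⬝ᵥ (Q *ᵥ (V *ᵥ w)) = w ⬝ᵥ w := by
  calc (V *ᵥ w) ⬝ᵥ (Q *ᵥ (V *ᵥ w)) = w ⬝ᵥ ((Vᵀ * Q * V) *ᵥ w) := by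
        rw [← mulVec_mulVec, ← mulVec_mulVec, dotProduct_mulVec w, vecMul_transpose]
    _ = w ⬝ᵥ w := by rw [hV, one_mulVec]

section ProjectedMatrix

variable {R : Type*} [CommRing R] {k : ℕ}

/-- The paper's `B̄_k`: `Bᵀ B` on top of the row `β_{k+1} α_{k+1} e_kᵀ`; with `βs` indexed from `0`,
`β_{k+1}` is `βs ⟨k - 1, _⟩`. -/
def lsmrProjectedMatrix (hk : 0 < k) (B : Matrix (Fin (k + 1)) (Fin k) R) (βs : Fin k → R)
    (ak1 : R) : Matrix (Fin (k + 1)) (Fin k) R :=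
  Matrix.of fun i j =>
    if h : (i : ℕ) < k then (Bᵀ * B) ⟨i, h⟩ j
    else if (j : ℕ) = k - 1 then βs ⟨k - 1, Nat.sub_lt hk Nat.one_pos⟩ * ak1 else 0

theorem lsmrProjectedMatrix_mulVec (hk : 0 < k) (B : Matrix (Fin (k + 1)) (Fin k) R)
    (βs : Fin k → R) (ak1 : R) (z : Fin k → R) :
    lsmrProjectedMatrix hk B βs ak1 *ᵥ z = Fin.snoc ((Bᵀ * B) *ᵥ z)
      (βs ⟨k - 1, Nat.sub_lt hk Nat.one_pos⟩ * ak1 * z ⟨k - 1, Nat.sub_lt hk Nat.one_pos⟩) := by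
  funext i
  induction i using Fin.lastCases with
  | last =>
    have hlast (j : Fin k) : (j : ℕ) = k - 1 ↔ j = ⟨k - 1, Nat.sub_lt hk Nat.one_pos⟩ :=
      Fin.ext_iff (b := ⟨k - 1, _⟩) |>.symm
    simp [lsmrProjectedMatrix, mulVec, dotProduct, ite_mul, hlast]
  | cast i => simp [lsmrProjectedMatrix, mulVec, dotProduct]

end ProjectedMatrix

section Bidiagonal

variable {R : Type*} [CommRing R] {k : ℕ}

def IsLowerBidiagonal (αs βs : Fin k → R) (B : Matrix (Fin (k + 1)) (Fin k) R) : Prop :=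
  ∀ i j, B i j =
    if (i : ℕ) = (j : ℕ) then αs j else if (i : ℕ) = (j : ℕ) + 1 then βs j else 0

variable (hk : 0 < k) {B : Matrix (Fin (k + 1)) (Fin k) R} {αs βs : Fin k → R}

theorem IsLowerBidiagonal.row_zero (hB : IsLowerBidiagonal αs βs B) :
    B 0 = Pi.single ⟨0, hk⟩ (αs ⟨0, hk⟩) := by
  funext j
  rw [hB]
  rcases eq_or_ne j ⟨0, hk⟩ with rfl | hj
  · simp
  · have hj' : (j : ℕ) ≠ 0 := fun h => hj (Fin.ext h)
    simp [hj, Ne.symm hj']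

theorem IsLowerBidiagonal.row_last (hB : IsLowerBidiagonal αs βs B) :
    B (Fin.last k) =
      Pi.single ⟨k - 1, Nat.sub_lt hk Nat.one_pos⟩ (βs ⟨k - 1, Nat.sub_lt hk Nat.one_pos⟩) := by
  funext j
  rcases eq_or_ne j ⟨k - 1, Nat.sub_lt hk Nat.one_pos⟩ with rfl | hj
  · rw [hB, Pi.single_eq_same, if_neg (by simp; omega), if_pos (by simp; omega)]
  · have hj' : (j : ℕ) ≠ k - 1 := fun h => hj (Fin.ext h)
    rw [hB, Pi.single_eq_of_ne hj, if_neg (by simp; omega), if_neg (by simp; omega)]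

theorem IsLowerBidiagonal.snoc_eq_lsmrProjectedMatrix_mulVec_sub
    (hB : IsLowerBidiagonal αs βs B) (β1 ak1 : R) (z : Fin k → R) :
    (Fin.snoc (Bᵀ *ᵥ (B *ᵥ z - β1 • Pi.single 0 1))
        (ak1 * (B *ᵥ z - β1 • Pi.single 0 1 : Fin (k + 1) → R) (Fin.last k)) : Fin (k + 1) → R)
      = lsmrProjectedMatrix hk B βs ak1 *ᵥ z - (β1 * αs ⟨0, hk⟩) • Pi.single 0 1 := by
  have hBt : Bᵀ *ᵥ Pi.single 0 1 = Pi.single ⟨0, hk⟩ (αs ⟨0, hk⟩) := by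
    rw [mulVec_single_one, col_transpose]
    exact hB.row_zero hk
  have hBz : (B *ᵥ z) (Fin.last k) =
      βs ⟨k - 1, Nat.sub_lt hk Nat.one_pos⟩ * z ⟨k - 1, Nat.sub_lt hk Nat.one_pos⟩ := by
    simp only [mulVec, hB.row_last hk, single_dotProduct]
  rw [lsmrProjectedMatrix_mulVec, mulVec_sub, mulVec_smul, mulVec_mulVec, hBt]
  funext i
  induction i using Fin.lastCases with
  | last =>
    have hlast : Fin.last k ≠ 0 := by simp [Fin.ext_iff]; omega
    simp [hBz, hlast]
    ring
  | cast i =>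
    have hi : i.castSucc = 0 ↔ i = ⟨0, hk⟩ := by simp [Fin.ext_iff]
    simp only [Pi.sub_apply, Pi.smul_apply, Fin.snoc_castSucc]
    simp [Pi.single_apply, hi]

end Bidiagonal

theorem mulVec_residual_eq_of_bidiagonalization {R m n : Type*} [CommRing R] [Fintype m]
    [Fintype n] {k : ℕ} {B : Matrix (Fin (k + 1)) (Fin k) R} {K : Matrix m n R}
    {C : Matrix n m R} {U : Matrix m (Fin (k + 1)) R} {Vk : Matrix n (Fin k) R} {vk1 : n → R}
    {b : m → R} {β1 ak1 : R} (hb : b = β1 • (U *ᵥ Pi.single 0 1)) (hKV : K * Vk = U * B)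
    (hCU : C * U = Vk * Bᵀ + ak1 • vecMulVec vk1 (Pi.single (Fin.last k) 1)) (z : Fin k → R) :
    C *ᵥ (K *ᵥ (Vk *ᵥ z) - b) = (Matrix.of fun i => Fin.snoc (Vk i) (vk1 i)) *ᵥ
      Fin.snoc (Bᵀ *ᵥ (B *ᵥ z - β1 • Pi.single 0 1))
        (ak1 * (B *ᵥ z - β1 • Pi.single 0 1 : Fin (k + 1) → R) (Fin.last k)) := by
  have hr : K *ᵥ (Vk *ᵥ z) - b = U *ᵥ (B *ᵥ z - β1 • Pi.single 0 1) := by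
    rw [mulVec_mulVec, hKV, ← mulVec_mulVec, hb, mulVec_sub, mulVec_smul]
  rw [hr, mulVec_mulVec, hCU, of_snoc_mulVec_snoc, add_mulVec, ← mulVec_mulVec, smul_mulVec,
    vecMulVec_mulVec, single_one_dotProduct, op_smul_eq_smul, smul_smul]

theorem objective_eq_projected_objective {R m n : Type*} [CommRing R] [Fintype m] [Fintype n]
    {k : ℕ} (hk : 0 < k) {B : Matrix (Fin (k + 1)) (Fin k) R} {αs βs : Fin k → R}
    {K : Matrix m n R} {C : Matrix n m R} {U : Matrix m (Fin (k + 1)) R} {Q : Matrix n n R}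
    {Vk : Matrix n (Fin k) R} {vk1 : n → R} {b : m → R} {β1 ak1 : R}
    (hB : IsLowerBidiagonal αs βs B) (hb : b = β1 • (U *ᵥ Pi.single 0 1))
    (hKV : K * Vk = U * B)
    (hCU : C * U = Vk * Bᵀ + ak1 • vecMulVec vk1 (Pi.single (Fin.last k) 1))
    (hV : (Matrix.of fun i => Fin.snoc (Vk i) (vk1 i))ᵀ * Q *
      (Matrix.of fun i => Fin.snoc (Vk i) (vk1 i)) = 1) (lam : R) (z : Fin k → R) :
    (C *ᵥ (K *ᵥ (Vk *ᵥ z) - b)) ⬝ᵥ (Q *ᵥ (C *ᵥ (K *ᵥ (Vk *ᵥ z) - b))) +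
        lam ^ 2 * ((Vk *ᵥ z) ⬝ᵥ (Q *ᵥ (Vk *ᵥ z)))
      = (lsmrProjectedMatrix hk B βs ak1 *ᵥ z - (β1 * αs ⟨0, hk⟩) • Pi.single 0 1) ⬝ᵥ
          (lsmrProjectedMatrix hk B βs ak1 *ᵥ z - (β1 * αs ⟨0, hk⟩) • Pi.single 0 1) +
        lam ^ 2 * (z ⬝ᵥ z) := by
  have hVz : Vk *ᵥ z = (Matrix.of fun i => Fin.snoc (Vk i) (vk1 i)) *ᵥ Fin.snoc z 0 := by
    simp [of_snoc_mulVec_snoc]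
  rw [mulVec_residual_eq_of_bidiagonalization hb hKV hCU,
    dotProduct_mulVec_mulVec_of_transpose_mul_mul_eq_one hV,
    hB.snoc_eq_lsmrProjectedMatrix_mulVec_sub hk, hVz,
    dotProduct_mulVec_mulVec_of_transpose_mul_mul_eq_one hV, snoc_dotProduct_snoc, mul_zero,
    add_zero]

theorem stmt_17_general {m n k : ℕ} (hk : 0 < k) (A : Matrix (Fin m) (Fin n) ℝ) (b : Fin m → ℝ)
    (R : Matrix (Fin m) (Fin m) ℝ) (Q : Matrix (Fin n) (Fin n) ℝ)
    (lam : ℝ) (αs βs : Fin k → ℝ) (ak1 : ℝ) (β1 : ℝ)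
    (B : Matrix (Fin (k + 1)) (Fin k) ℝ)
    (hB : ∀ i j, B i j =
        if (i : ℕ) = (j : ℕ) then αs j else if (i : ℕ) = (j : ℕ) + 1 then βs j else 0)
    (Vk : Matrix (Fin n) (Fin k) ℝ) (vk1 : Fin n → ℝ)
    (Uk1 : Matrix (Fin m) (Fin (k + 1)) ℝ)
    (hb : b = β1 • (Uk1 *ᵥ (Pi.single 0 1 : Fin (k + 1) → ℝ)))
    (hAQV : A * Q * Vk = Uk1 * B)
    (hATU : Aᵀ * R⁻¹ * Uk1
        = Vk * Bᵀ + ak1 • vecMulVec vk1 (Pi.single (Fin.last k) 1))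
    (hVorth : (Matrix.of fun i : Fin n => Fin.snoc (Vk i) (vk1 i))ᵀ * Q *
        (Matrix.of fun i : Fin n => Fin.snoc (Vk i) (vk1 i)) = 1) :
    (∀ z : Fin k → ℝ,
      ((Aᵀ * R⁻¹) *ᵥ ((A * Q) *ᵥ (Vk *ᵥ z) - b)) ⬝ᵥ
          (Q *ᵥ ((Aᵀ * R⁻¹) *ᵥ ((A * Q) *ᵥ (Vk *ᵥ z) - b))) +
          lam ^ 2 * ((Vk *ᵥ z) ⬝ᵥ (Q *ᵥ (Vk *ᵥ z)))
        = ((Matrix.of fun (i : Fin (k + 1)) (j : Fin k) =>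
              if h : (i : ℕ) < k then (Bᵀ * B) ⟨i, h⟩ j
              else if (j : ℕ) = k - 1 then βs ⟨k - 1, Nat.sub_lt hk Nat.one_pos⟩ * ak1 else 0)
            *ᵥ z - (β1 * αs ⟨0, hk⟩) • (Pi.single 0 1 : Fin (k + 1) → ℝ)) ⬝ᵥ
          ((Matrix.of fun (i : Fin (k + 1)) (j : Fin k) =>
              if h : (i : ℕ) < k then (Bᵀ * B) ⟨i, h⟩ j
              else if (j : ℕ) = k - 1 then βs ⟨k - 1, Nat.sub_lt hk Nat.one_pos⟩ * ak1 else 0)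
            *ᵥ z - (β1 * αs ⟨0, hk⟩) • (Pi.single 0 1 : Fin (k + 1) → ℝ)) +
          lam ^ 2 * (z ⬝ᵥ z)) ∧
    (∀ z0 : Fin k → ℝ,
      (∀ z : Fin k → ℝ,
          (1 / 2) * (((Matrix.of fun (i : Fin (k + 1)) (j : Fin k) =>
                if h : (i : ℕ) < k then (Bᵀ * B) ⟨i, h⟩ j
                else if (j : ℕ) = k - 1 then βs ⟨k - 1, Nat.sub_lt hk Nat.one_pos⟩ * ak1 else 0)
              *ᵥ z0 - (β1 * αs ⟨0, hk⟩) • (Pi.single 0 1 : Fin (k + 1) → ℝ)) ⬝ᵥ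
            ((Matrix.of fun (i : Fin (k + 1)) (j : Fin k) =>
                if h : (i : ℕ) < k then (Bᵀ * B) ⟨i, h⟩ j
                else if (j : ℕ) = k - 1 then βs ⟨k - 1, Nat.sub_lt hk Nat.one_pos⟩ * ak1 else 0)
              *ᵥ z0 - (β1 * αs ⟨0, hk⟩) • (Pi.single 0 1 : Fin (k + 1) → ℝ))) +
            (lam ^ 2 / 2) * (z0 ⬝ᵥ z0)
          ≤ (1 / 2) * (((Matrix.of fun (i : Fin (k + 1)) (j : Fin k) =>
                if h : (i : ℕ) < k then (Bᵀ * B) ⟨i, h⟩ j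
                else if (j : ℕ) = k - 1 then βs ⟨k - 1, Nat.sub_lt hk Nat.one_pos⟩ * ak1 else 0)
              *ᵥ z - (β1 * αs ⟨0, hk⟩) • (Pi.single 0 1 : Fin (k + 1) → ℝ)) ⬝ᵥ
            ((Matrix.of fun (i : Fin (k + 1)) (j : Fin k) =>
                if h : (i : ℕ) < k then (Bᵀ * B) ⟨i, h⟩ j
                else if (j : ℕ) = k - 1 then βs ⟨k - 1, Nat.sub_lt hk Nat.one_pos⟩ * ak1 else 0)
              *ᵥ z - (β1 * αs ⟨0, hk⟩) • (Pi.single 0 1 : Fin (k + 1) → ℝ))) +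
            (lam ^ 2 / 2) * (z ⬝ᵥ z)) ↔
      (∀ z : Fin k → ℝ,
          (1 / 2) * (((Aᵀ * R⁻¹) *ᵥ ((A * Q) *ᵥ (Vk *ᵥ z0) - b)) ⬝ᵥ
              (Q *ᵥ ((Aᵀ * R⁻¹) *ᵥ ((A * Q) *ᵥ (Vk *ᵥ z0) - b)))) +
            (lam ^ 2 / 2) * ((Vk *ᵥ z0) ⬝ᵥ (Q *ᵥ (Vk *ᵥ z0)))
          ≤ (1 / 2) * (((Aᵀ * R⁻¹) *ᵥ ((A * Q) *ᵥ (Vk *ᵥ z) - b)) ⬝ᵥ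
              (Q *ᵥ ((Aᵀ * R⁻¹) *ᵥ ((A * Q) *ᵥ (Vk *ᵥ z) - b)))) +
            (lam ^ 2 / 2) * ((Vk *ᵥ z) ⬝ᵥ (Q *ᵥ (Vk *ᵥ z))))) := by
  have key := objective_eq_projected_objective hk hB hb hAQV hATU hVorth lam
  unfold lsmrProjectedMatrix at key
  refine ⟨key, fun z0 => forall_congr' fun z => ?_⟩
  have h0 := key z0
  have h1 := key z
  constructor <;> intro h <;> linarith

theorem stmt_17 {m n k : ℕ} (hk : 0 < k) (A : Matrix (Fin m) (Fin n) ℝ) (b : Fin m → ℝ)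
    (R : Matrix (Fin m) (Fin m) ℝ) (Q : Matrix (Fin n) (Fin n) ℝ)
    (hR : R.PosDef) (hQ : Q.PosDef) (lam : ℝ)
    (αs βs : Fin k → ℝ) (hαs : ∀ j, 0 < αs j) (hβs : ∀ j, 0 < βs j)
    (ak1 : ℝ) (β1 : ℝ) (hβ1 : 0 < β1)
    (B : Matrix (Fin (k + 1)) (Fin k) ℝ)
    (hB : ∀ i j, B i j =
        if (i : ℕ) = (j : ℕ) then αs j else if (i : ℕ) = (j : ℕ) + 1 then βs j else 0)
    (Vk : Matrix (Fin n) (Fin k) ℝ) (vk1 : Fin n → ℝ)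
    (Uk1 : Matrix (Fin m) (Fin (k + 1)) ℝ)
    (hb : b = β1 • (Uk1 *ᵥ (Pi.single 0 1 : Fin (k + 1) → ℝ)))
    (hAQV : A * Q * Vk = Uk1 * B)
    (hATU : Aᵀ * R⁻¹ * Uk1
        = Vk * Bᵀ + ak1 • vecMulVec vk1 (Pi.single (Fin.last k) 1))
    (hVorth : (Matrix.of fun i : Fin n => Fin.snoc (Vk i) (vk1 i))ᵀ * Q *
        (Matrix.of fun i : Fin n => Fin.snoc (Vk i) (vk1 i)) = 1) :
    (∀ z : Fin k → ℝ,
      ((Aᵀ * R⁻¹) *ᵥ ((A * Q) *ᵥ (Vk *ᵥ z) - b)) ⬝ᵥ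
          (Q *ᵥ ((Aᵀ * R⁻¹) *ᵥ ((A * Q) *ᵥ (Vk *ᵥ z) - b))) +
          lam ^ 2 * ((Vk *ᵥ z) ⬝ᵥ (Q *ᵥ (Vk *ᵥ z)))
        = ((Matrix.of fun (i : Fin (k + 1)) (j : Fin k) =>
              if h : (i : ℕ) < k then (Bᵀ * B) ⟨i, h⟩ j
              else if (j : ℕ) = k - 1 then βs ⟨k - 1, Nat.sub_lt hk Nat.one_pos⟩ * ak1 else 0)
            *ᵥ z - (β1 * αs ⟨0, hk⟩) • (Pi.single 0 1 : Fin (k + 1) → ℝ)) ⬝ᵥ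
          ((Matrix.of fun (i : Fin (k + 1)) (j : Fin k) =>
              if h : (i : ℕ) < k then (Bᵀ * B) ⟨i, h⟩ j
              else if (j : ℕ) = k - 1 then βs ⟨k - 1, Nat.sub_lt hk Nat.one_pos⟩ * ak1 else 0)
            *ᵥ z - (β1 * αs ⟨0, hk⟩) • (Pi.single 0 1 : Fin (k + 1) → ℝ)) +
          lam ^ 2 * (z ⬝ᵥ z)) ∧
    (∀ z0 : Fin k → ℝ,
      (∀ z : Fin k → ℝ,
          (1 / 2) * (((Matrix.of fun (i : Fin (k + 1)) (j : Fin k) =>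
                if h : (i : ℕ) < k then (Bᵀ * B) ⟨i, h⟩ j
                else if (j : ℕ) = k - 1 then βs ⟨k - 1, Nat.sub_lt hk Nat.one_pos⟩ * ak1 else 0)
              *ᵥ z0 - (β1 * αs ⟨0, hk⟩) • (Pi.single 0 1 : Fin (k + 1) → ℝ)) ⬝ᵥ
            ((Matrix.of fun (i : Fin (k + 1)) (j : Fin k) =>
                if h : (i : ℕ) < k then (Bᵀ * B) ⟨i, h⟩ j
                else if (j : ℕ) = k - 1 then βs ⟨k - 1, Nat.sub_lt hk Nat.one_pos⟩ * ak1 else 0)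
              *ᵥ z0 - (β1 * αs ⟨0, hk⟩) • (Pi.single 0 1 : Fin (k + 1) → ℝ))) +
            (lam ^ 2 / 2) * (z0 ⬝ᵥ z0)
          ≤ (1 / 2) * (((Matrix.of fun (i : Fin (k + 1)) (j : Fin k) =>
                if h : (i : ℕ) < k then (Bᵀ * B) ⟨i, h⟩ j
                else if (j : ℕ) = k - 1 then βs ⟨k - 1, Nat.sub_lt hk Nat.one_pos⟩ * ak1 else 0)
              *ᵥ z - (β1 * αs ⟨0, hk⟩) • (Pi.single 0 1 : Fin (k + 1) → ℝ)) ⬝ᵥ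
            ((Matrix.of fun (i : Fin (k + 1)) (j : Fin k) =>
                if h : (i : ℕ) < k then (Bᵀ * B) ⟨i, h⟩ j
                else if (j : ℕ) = k - 1 then βs ⟨k - 1, Nat.sub_lt hk Nat.one_pos⟩ * ak1 else 0)
              *ᵥ z - (β1 * αs ⟨0, hk⟩) • (Pi.single 0 1 : Fin (k + 1) → ℝ))) +
            (lam ^ 2 / 2) * (z ⬝ᵥ z)) ↔
      (∀ z : Fin k → ℝ,
          (1 / 2) * (((Aᵀ * R⁻¹) *ᵥ ((A * Q) *ᵥ (Vk *ᵥ z0) - b)) ⬝ᵥ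
              (Q *ᵥ ((Aᵀ * R⁻¹) *ᵥ ((A * Q) *ᵥ (Vk *ᵥ z0) - b)))) +
            (lam ^ 2 / 2) * ((Vk *ᵥ z0) ⬝ᵥ (Q *ᵥ (Vk *ᵥ z0)))
          ≤ (1 / 2) * (((Aᵀ * R⁻¹) *ᵥ ((A * Q) *ᵥ (Vk *ᵥ z) - b)) ⬝ᵥ
              (Q *ᵥ ((Aᵀ * R⁻¹) *ᵥ ((A * Q) *ᵥ (Vk *ᵥ z) - b)))) +
            (lam ^ 2 / 2) * ((Vk *ᵥ z) ⬝ᵥ (Q *ᵥ (Vk *ᵥ z))))) :=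
  stmt_17_general hk A b R Q lam αs βs ak1 β1 B hB Vk vk1 Uk1 hb hAQV hATU hVorth
end

section
/- Let A ∈ ℝ^{m×n}, b ∈ ℝ^m, let R ∈ ℝ^{m×m} and Q ∈ ℝ^{n×n} be symmetric positive definite, and let λ ∈ ℝ. Suppose U_R ∈ ℝ^{m×m} with U_Rᵀ R⁻¹ U_R = I_m, V_Q ∈ ℝ^{n×n} with V_Qᵀ Q⁻¹ V_Q = I_n, and U_R⁻¹ A V_Q = Σ where Σ ∈ ℝ^{m×n} has Σ_{ij} = 0 for i ≠ j. Set g = U_Rᵀ R⁻¹ b. Then for every k ≥ 1, K_k(Aᵀ R⁻¹ A Q + λ² I_n, Aᵀ R⁻¹ b) = span{ V_Q⁻ᵀ (Σᵀ Σ + λ² I_n)^q Σᵀ g : q = 0, 1, ..., k−1 }. -/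
open Matrix

lemma conj_pow_aux_s18 {n : ℕ} (P D : Matrix (Fin n) (Fin n) ℝ)
    (h1 : P * P⁻¹ = 1) (h2 : P⁻¹ * P = 1) (q : ℕ) :
    (P⁻¹ * D * P) ^ q = P⁻¹ * D ^ q * P := by
  induction q with
  | zero => simp [h2]
  | succ q ih =>
      rw [pow_succ, ih, pow_succ]
      calc P⁻¹ * D ^ q * P * (P⁻¹ * D * P)
          = P⁻¹ * D ^ q * (P * P⁻¹) * D * P := by simp only [Matrix.mul_assoc]
        _ = P⁻¹ * (D ^ q * D) * P := by
            rw [h1]; simp only [Matrix.mul_one, Matrix.mul_assoc]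

theorem stmt_18 {m n : ℕ} (A : Matrix (Fin m) (Fin n) ℝ) (b : Fin m → ℝ)
    (R UR : Matrix (Fin m) (Fin m) ℝ) (Q VQ : Matrix (Fin n) (Fin n) ℝ)
    (Sg : Matrix (Fin m) (Fin n) ℝ)
    (hR : R.PosDef) (hQ : Q.PosDef) (lam : ℝ)
    (hURu : IsUnit UR) (hVQu : IsUnit VQ)
    (hUR : URᵀ * R⁻¹ * UR = 1) (hVQ : VQᵀ * Q⁻¹ * VQ = 1)
    (hGSVD : UR⁻¹ * A * VQ = Sg)
    (hdiag : ∀ (i : Fin m) (j : Fin n), (i : ℕ) ≠ (j : ℕ) → Sg i j = 0)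
    (k : ℕ) (hk : 1 ≤ k) :
    krylov (Aᵀ * R⁻¹ * A * Q + lam ^ 2 • (1 : Matrix (Fin n) (Fin n) ℝ))
        ((Aᵀ * R⁻¹) *ᵥ b) k
      = Submodule.span ℝ (Set.range fun q : Fin k =>
          ((VQᵀ)⁻¹ * (Sgᵀ * Sg + lam ^ 2 • (1 : Matrix (Fin n) (Fin n) ℝ)) ^ (q : ℕ) * Sgᵀ) *ᵥ
            ((URᵀ * R⁻¹) *ᵥ b)) := by
  have hURd : IsUnit UR.det := (Matrix.isUnit_iff_isUnit_det UR).mp hURu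
  have hVQd : IsUnit VQ.det := (Matrix.isUnit_iff_isUnit_det VQ).mp hVQu
  have hQd : IsUnit Q.det := isUnit_iff_ne_zero.mpr hQ.det_pos.ne'
  have hVQ1 : VQ * VQ⁻¹ = 1 := Matrix.mul_nonsing_inv VQ hVQd
  have hVQ2 : VQ⁻¹ * VQ = 1 := Matrix.nonsing_inv_mul VQ hVQd
  have hUR1 : UR * UR⁻¹ = 1 := Matrix.mul_nonsing_inv UR hURd
  have hVQTd : IsUnit VQᵀ.det := by rwa [Matrix.det_transpose]
  have hVQT1 : VQᵀ * (VQᵀ)⁻¹ = 1 := Matrix.mul_nonsing_inv _ hVQTd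
  have hVQT2 : (VQᵀ)⁻¹ * VQᵀ = 1 := Matrix.nonsing_inv_mul _ hVQTd
  -- A = UR * Sg * VQ⁻¹
  have hA : A = UR * Sg * VQ⁻¹ := by
    rw [← hGSVD]
    calc A = UR * UR⁻¹ * A * (VQ * VQ⁻¹) := by
            rw [hUR1, hVQ1, Matrix.one_mul, Matrix.mul_one]
      _ = UR * (UR⁻¹ * A * VQ) * VQ⁻¹ := by simp only [Matrix.mul_assoc]
  -- Q = VQ * VQᵀ
  have hQinv : Q⁻¹ = (VQᵀ)⁻¹ * VQ⁻¹ := by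
    calc Q⁻¹ = (VQᵀ)⁻¹ * VQᵀ * Q⁻¹ * (VQ * VQ⁻¹) := by
          rw [hVQT2, hVQ1, Matrix.one_mul, Matrix.mul_one]
      _ = (VQᵀ)⁻¹ * (VQᵀ * Q⁻¹ * VQ) * VQ⁻¹ := by simp only [Matrix.mul_assoc]
      _ = (VQᵀ)⁻¹ * VQ⁻¹ := by rw [hVQ, Matrix.mul_one]
  have hQeq : Q = VQ * VQᵀ := by
    have h : Q⁻¹⁻¹ = ((VQᵀ)⁻¹ * VQ⁻¹)⁻¹ := congrArg _ hQinv
    rwa [Matrix.nonsing_inv_nonsing_inv Q hQd, Matrix.mul_inv_rev,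
      Matrix.nonsing_inv_nonsing_inv VQ hVQd,
      Matrix.nonsing_inv_nonsing_inv VQᵀ hVQTd] at h
  set D := Sgᵀ * Sg + lam ^ 2 • (1 : Matrix (Fin n) (Fin n) ℝ) with hD
  set C := Aᵀ * R⁻¹ * A * Q + lam ^ 2 • (1 : Matrix (Fin n) (Fin n) ℝ) with hC
  have hAT : Aᵀ = (VQᵀ)⁻¹ * Sgᵀ * URᵀ := by
    rw [hA]
    simp [Matrix.transpose_mul, Matrix.transpose_nonsing_inv, Matrix.mul_assoc]
  have hconj : C = (VQᵀ)⁻¹ * D * VQᵀ := by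
    have h1 : Aᵀ * R⁻¹ * A * Q = (VQᵀ)⁻¹ * (Sgᵀ * Sg) * VQᵀ := by
      rw [hAT, hA, hQeq]
      calc (VQᵀ)⁻¹ * Sgᵀ * URᵀ * R⁻¹ * (UR * Sg * VQ⁻¹) * (VQ * VQᵀ)
          = (VQᵀ)⁻¹ * Sgᵀ * (URᵀ * R⁻¹ * UR) * (Sg * ((VQ⁻¹ * VQ) * VQᵀ)) := by
            simp only [Matrix.mul_assoc]
        _ = (VQᵀ)⁻¹ * (Sgᵀ * Sg) * VQᵀ := by
            rw [hUR, hVQ2, Matrix.mul_one, Matrix.one_mul]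
            simp only [Matrix.mul_assoc]
    have h2 : lam ^ 2 • (1 : Matrix (Fin n) (Fin n) ℝ)
        = (VQᵀ)⁻¹ * (lam ^ 2 • (1 : Matrix (Fin n) (Fin n) ℝ)) * VQᵀ := by
      rw [Matrix.mul_smul, Matrix.smul_mul, Matrix.mul_one, hVQT2]
    rw [hC, hD, h1, Matrix.mul_add, Matrix.add_mul, ← h2]
  have key : ∀ q : ℕ, C ^ q * (Aᵀ * R⁻¹) = ((VQᵀ)⁻¹ * D ^ q * Sgᵀ) * (URᵀ * R⁻¹) := by
    intro q
    rw [hconj, conj_pow_aux_s18 _ _ hVQT1 hVQT2, hAT]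
    calc (VQᵀ)⁻¹ * D ^ q * VQᵀ * ((VQᵀ)⁻¹ * Sgᵀ * URᵀ * R⁻¹)
        = (VQᵀ)⁻¹ * D ^ q * ((VQᵀ * (VQᵀ)⁻¹) * (Sgᵀ * (URᵀ * R⁻¹))) := by
          simp only [Matrix.mul_assoc]
      _ = (VQᵀ)⁻¹ * D ^ q * Sgᵀ * (URᵀ * R⁻¹) := by
          rw [hVQT1, Matrix.one_mul]
          simp only [Matrix.mul_assoc]
  unfold krylov
  congr 1
  ext v
  simp only [Set.mem_range]
  constructor <;> rintro ⟨q, rfl⟩ <;> exact ⟨q, by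
    rw [Matrix.mulVec_mulVec, Matrix.mulVec_mulVec, key (q : ℕ)]⟩
end

section
/- Let A ∈ ℝ^{m×n} (m ≥ n), b ∈ ℝ^m, μ ∈ ℝ^n, let R ∈ ℝ^{m×m} and Q ∈ ℝ^{n×n} be symmetric positive definite, and let λ ∈ ℝ. Suppose U_R ∈ ℝ^{m×m} with U_Rᵀ R⁻¹ U_R = I_m, V_Q ∈ ℝ^{n×n} with V_Qᵀ Q⁻¹ V_Q = I_n, and U_R⁻¹ A V_Q = Σ where Σ ∈ ℝ^{m×n} has Σ_{ij} = 0 for i ≠ j and diagonal entries σ̂_1, ..., σ̂_n > 0. Set g = U_Rᵀ R⁻¹ b and let Σ† denote the Moore–Penrose pseudoinverse of Σ. Then for every k ≥ 1 and every x_k ∈ K_k(Aᵀ R⁻¹ A Q + λ² I_n, Aᵀ R⁻¹ b), there exists a polynomial P of degree at most k−1 such that μ + Q x_k = μ + V_Q Φ_k Σ† g, where Φ_k = P(Σᵀ Σ + λ² I_n) Σᵀ Σ; i.e., every gen-LSQR iterate is a filtered GSVD solution. -/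
open Matrix

/-!
A Krylov vector is `P(C) Aᵀ R⁻¹ b` with `deg P ≤ k - 1`. The GSVD relations give `Q = V_Q V_Qᵀ`
and `A V_Q = U_R Σ`, and together with `U_Rᵀ R⁻¹ U_R = I` they make `V_Qᵀ` intertwine
`C = Aᵀ R⁻¹ A Q + λ² I` with `M = ΣᵀΣ + λ² I`, hence `P(C)` with `P(M)`. Thus
`Q P(C) Aᵀ R⁻¹ = V_Q P(M) (A V_Q)ᵀ R⁻¹ = V_Q P(M) Σᵀ U_Rᵀ R⁻¹`, and the Penrose conditions
give `Σᵀ = ΣᵀΣ Σ†`.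
-/

open Polynomial

theorem SemiconjBy.aeval {R S : Type*} [CommSemiring R] [Semiring S] [Algebra R S]
    {x a b : S} (h : SemiconjBy x a b) (p : R[X]) :
    SemiconjBy x (Polynomial.aeval a p) (Polynomial.aeval b p) := by
  induction p using Polynomial.induction_on' with
  | add p q hp hq => simpa only [map_add] using hp.add_right hq
  | monomial n r =>
    simpa only [aeval_monomial] using
      SemiconjBy.mul_right (Algebra.commutes r x).symm (h.pow_right n)

theorem Matrix.eq_mul_transpose_of_transpose_mul_nonsing_inv_mul_eq_one
    {n α : Type*} [Fintype n] [DecidableEq n] [CommRing α] {Q V : Matrix n n α}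
    (h : Vᵀ * Q⁻¹ * V = 1) : Q = V * Vᵀ := by
  have hinv : V * Vᵀ * Q⁻¹ = 1 := by
    rw [Matrix.mul_assoc, mul_eq_one_comm]
    exact h
  have hQ : IsUnit Q.det := isUnit_nonsing_inv_det_iff.mp (isUnit_det_of_left_inverse hinv)
  rw [← nonsing_inv_nonsing_inv Q hQ, inv_eq_left_inv hinv]

theorem Matrix.transpose_mul_mul_eq_transpose_of_penrose {m n α : Type*} [CommSemiring α]
    [Fintype m] [Fintype n] {S : Matrix m n α} {S' : Matrix n m α}
    (h1 : S * S' * S = S) (h3 : (S * S')ᵀ = S * S') :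
    Sᵀ * S * S' = Sᵀ := by
  have := congrArg transpose h1
  rwa [transpose_mul, h3, ← Matrix.mul_assoc] at this

theorem exists_aeval_mulVec_of_mem_krylov {n k : ℕ} {C : Matrix (Fin n) (Fin n) ℝ}
    {g x : Fin n → ℝ} (hx : x ∈ krylov C g k) :
    ∃ P : ℝ[X], P.natDegree ≤ k - 1 ∧ x = aeval C P *ᵥ g := by
  obtain ⟨c, rfl⟩ := (Submodule.mem_span_range_iff_exists_fun ℝ).mp hx
  refine ⟨∑ i : Fin k, Polynomial.C (c i) * X ^ (i : ℕ), ?_, ?_⟩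
  · refine natDegree_sum_le_of_forall_le _ _ fun i _ => (natDegree_C_mul_X_pow_le _ _).trans ?_
    omega
  · simp [map_sum, Matrix.sum_mulVec, Algebra.algebraMap_eq_smul_one, smul_mulVec]

theorem Matrix.semiconjBy_transpose_of_gsvd {m n α : Type*} [Fintype m] [Fintype n]
    [DecidableEq m] [DecidableEq n] [CommRing α] {A : Matrix m n α} {R U : Matrix m m α}
    {Q V : Matrix n n α} {S : Matrix m n α}
    (hU : Uᵀ * R⁻¹ * U = 1) (hAV : A * V = U * S) (hQ : Q = V * Vᵀ) (c : α) :
    SemiconjBy Vᵀ (Aᵀ * R⁻¹ * A * Q + c • 1) (Sᵀ * S + c • 1) := by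
  have hnormal : Vᵀ * (Aᵀ * R⁻¹ * A * Q) = Sᵀ * S * Vᵀ :=
    calc Vᵀ * (Aᵀ * R⁻¹ * A * Q) = (A * V)ᵀ * R⁻¹ * (A * V) * Vᵀ := by
          rw [hQ, transpose_mul]; simp only [Matrix.mul_assoc]
      _ = Sᵀ * (Uᵀ * R⁻¹ * U) * S * Vᵀ := by
          rw [hAV, transpose_mul]; simp only [Matrix.mul_assoc]
      _ = Sᵀ * S * Vᵀ := by rw [hU, Matrix.mul_one]
  rw [SemiconjBy, Matrix.mul_add, Matrix.add_mul, hnormal, Matrix.mul_smul, Matrix.smul_mul,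
    Matrix.mul_one, Matrix.one_mul]

theorem stmt_19_general {m n : ℕ} (A : Matrix (Fin m) (Fin n) ℝ)
    (b : Fin m → ℝ) (μ : Fin n → ℝ)
    (R UR : Matrix (Fin m) (Fin m) ℝ) (Q VQ : Matrix (Fin n) (Fin n) ℝ)
    (Sg : Matrix (Fin m) (Fin n) ℝ) (lam : ℝ)
    (hUR : URᵀ * R⁻¹ * UR = 1) (hVQ : VQᵀ * Q⁻¹ * VQ = 1)
    (hGSVD : UR⁻¹ * A * VQ = Sg)
    -- `Sd` is the Moore–Penrose pseudoinverse of `Sg`, characterized by the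
    -- four Penrose conditions:
    (Sd : Matrix (Fin n) (Fin m) ℝ)
    (hP1 : Sg * Sd * Sg = Sg) (hP3 : (Sg * Sd)ᵀ = Sg * Sd)
    (k : ℕ) :
    ∀ x ∈ krylov (Aᵀ * R⁻¹ * A * Q + lam ^ 2 • (1 : Matrix (Fin n) (Fin n) ℝ))
        ((Aᵀ * R⁻¹) *ᵥ b) k,
      ∃ P : Polynomial ℝ, P.natDegree ≤ k - 1 ∧
        μ + Q *ᵥ x
          = μ + (VQ *
              ((Polynomial.aeval (Sgᵀ * Sg + lam ^ 2 • (1 : Matrix (Fin n) (Fin n) ℝ)) P) *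
                (Sgᵀ * Sg)) * Sd) *ᵥ ((URᵀ * R⁻¹) *ᵥ b) := by
  intro x hx
  obtain ⟨P, hPdeg, rfl⟩ := exists_aeval_mulVec_of_mem_krylov hx
  refine ⟨P, hPdeg, ?_⟩
  have hQ : Q = VQ * VQᵀ := eq_mul_transpose_of_transpose_mul_nonsing_inv_mul_eq_one hVQ
  have hAV : A * VQ = UR * Sg := by
    rw [← hGSVD, Matrix.mul_assoc,
      mul_nonsing_inv_cancel_left _ _ (isUnit_det_of_left_inverse hUR)]
  have hsemi := (semiconjBy_transpose_of_gsvd hUR hAV hQ (lam ^ 2)).aeval P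
  set C := Aᵀ * R⁻¹ * A * Q + lam ^ 2 • (1 : Matrix (Fin n) (Fin n) ℝ)
  set M := Sgᵀ * Sg + lam ^ 2 • (1 : Matrix (Fin n) (Fin n) ℝ)
  rw [mulVec_mulVec, mulVec_mulVec, mulVec_mulVec]
  congr 2
  calc Q * aeval C P * (Aᵀ * R⁻¹) = VQ * (VQᵀ * aeval C P) * (Aᵀ * R⁻¹) := by
        rw [hQ]; simp only [Matrix.mul_assoc]
    _ = VQ * aeval M P * ((A * VQ)ᵀ * R⁻¹) := by
        rw [hsemi.eq, transpose_mul]; simp only [Matrix.mul_assoc]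
    _ = VQ * aeval M P * (Sgᵀ * Sg * Sd * (URᵀ * R⁻¹)) := by
        rw [hAV, transpose_mul, transpose_mul_mul_eq_transpose_of_penrose hP1 hP3]
        simp only [Matrix.mul_assoc]
    _ = VQ * (aeval M P * (Sgᵀ * Sg)) * Sd * (URᵀ * R⁻¹) := by simp only [Matrix.mul_assoc]

theorem stmt_19 {m n : ℕ} (hmn : n ≤ m) (A : Matrix (Fin m) (Fin n) ℝ)
    (b : Fin m → ℝ) (μ : Fin n → ℝ)
    (R UR : Matrix (Fin m) (Fin m) ℝ) (Q VQ : Matrix (Fin n) (Fin n) ℝ)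
    (Sg : Matrix (Fin m) (Fin n) ℝ)
    (hR : R.PosDef) (hQ : Q.PosDef) (lam : ℝ)
    (hURu : IsUnit UR) (hVQu : IsUnit VQ)
    (hUR : URᵀ * R⁻¹ * UR = 1) (hVQ : VQᵀ * Q⁻¹ * VQ = 1)
    (hGSVD : UR⁻¹ * A * VQ = Sg)
    (hdiag : ∀ (i : Fin m) (j : Fin n), (i : ℕ) ≠ (j : ℕ) → Sg i j = 0)
    (hpos : ∀ j : Fin n, 0 < Sg (Fin.castLE hmn j) j)
    -- `Sd` is the Moore–Penrose pseudoinverse of `Sg`, characterized by the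
    -- four Penrose conditions:
    (Sd : Matrix (Fin n) (Fin m) ℝ)
    (hP1 : Sg * Sd * Sg = Sg) (hP2 : Sd * Sg * Sd = Sd)
    (hP3 : (Sg * Sd)ᵀ = Sg * Sd) (hP4 : (Sd * Sg)ᵀ = Sd * Sg)
    (k : ℕ) (hk : 1 ≤ k) :
    ∀ x ∈ krylov (Aᵀ * R⁻¹ * A * Q + lam ^ 2 • (1 : Matrix (Fin n) (Fin n) ℝ))
        ((Aᵀ * R⁻¹) *ᵥ b) k,
      ∃ P : Polynomial ℝ, P.natDegree ≤ k - 1 ∧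
        μ + Q *ᵥ x
          = μ + (VQ *
              ((Polynomial.aeval (Sgᵀ * Sg + lam ^ 2 • (1 : Matrix (Fin n) (Fin n) ℝ)) P) *
                (Sgᵀ * Sg)) * Sd) *ᵥ ((URᵀ * R⁻¹) *ᵥ b) :=
  stmt_19_general A b μ R UR Q VQ Sg lam hUR hVQ hGSVD Sd hP1 hP3 k
end
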